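/- arXiv:1901.03613 — 14 statements merged into one kernel-verified Lean document; each statement's English description precedes it below -/
import Mathlib

section
/- Let A and B be finite sets and let G = Sym(A × B). Then G = G_L · G_R · G_L and G = G_R · G_L · G_R; that is, every permutation π of A × B can be written as π = g₁ ∘ g₂ ∘ g₃ with g₁, g₃ ∈ G_L and g₂ ∈ G_R, and can also be written as π = h₁ ∘ h₂ ∘ h₃ with h₁, h₃ ∈ G_R and h₂ ∈ G_L. -/
/-!
For columns `b, b'`, count the points of column `b` that `π` sends into column `b'`. This
`B × B` matrix has all line sums `|A|`, so by Hall's theorem it is a sum of `|A|` permutation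
matrices `σ a`, one for each row `a`. A column move can therefore reorder each column `b` so
that its point in row `a` is one that `π` sends into column `σ a b`; after the row move
`(a, b) ↦ (a, σ a b)` every point sits in the column `π` sends it to, and a final column move
finishes. The second decomposition is the first one conjugated by `(a, b) ↦ (b, a)`.
-/

open Finset Equiv

section IntegerBirkhoff

variable {ι : Type*} [Fintype ι] [DecidableEq ι] {M : ι → ι → ℕ} {n : ℕ}

theorem card_le_card_biUnion_pos_of_sum_eq (hn : 0 < n) (hrow : ∀ i, ∑ j, M i j = n)
    (hcol : ∀ j, ∑ i, M i j = n) (s : Finset ι) :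
    #s ≤ #(s.biUnion fun i => {j | 0 < M i j}) := by
  set t := s.biUnion fun i => {j | 0 < M i j}
  have hsupp : ∀ i ∈ s, ∑ j ∈ t, M i j = n := by
    intro i hi
    rw [← hrow i]
    refine sum_subset (subset_univ t) fun j _ hj => ?_
    by_contra h
    exact hj (mem_biUnion.mpr ⟨i, hi, by simpa [Nat.pos_iff_ne_zero] using h⟩)
  refine le_of_mul_le_mul_left ?_ hn
  calc n * #s = ∑ i ∈ s, ∑ j ∈ t, M i j := by simp [sum_congr rfl hsupp, mul_comm]
    _ ≤ ∑ i, ∑ j ∈ t, M i j := sum_le_sum_of_subset (subset_univ s)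
    _ = n * #t := by simp [sum_comm (s := univ), hcol, mul_comm]

theorem exists_perm_forall_pos_of_sum_eq (hn : 0 < n) (hrow : ∀ i, ∑ j, M i j = n)
    (hcol : ∀ j, ∑ i, M i j = n) : ∃ σ : Perm ι, ∀ i, 0 < M i (σ i) := by
  obtain ⟨f, hf_inj, hf⟩ := (all_card_le_biUnion_card_iff_exists_injective _).mp
    (card_le_card_biUnion_pos_of_sum_eq hn hrow hcol)
  exact ⟨ofBijective f (Finite.injective_iff_bijective.mp hf_inj), fun i => by simpa using hf i⟩

theorem exists_perms_of_sum_eq (hrow : ∀ i, ∑ j, M i j = n) (hcol : ∀ j, ∑ i, M i j = n) :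
    ∃ σ : Fin n → Perm ι, ∀ i j, M i j = #{k | σ k i = j} := by
  induction n generalizing M with
  | zero =>
    refine ⟨finZeroElim, fun i j => ?_⟩
    simpa using sum_eq_zero_iff.mp (hrow i) j (mem_univ j)
  | succ n ih =>
    obtain ⟨σ, hσ⟩ := exists_perm_forall_pos_of_sum_eq n.succ_pos hrow hcol
    set M' : ι → ι → ℕ := fun i j => M i j - if σ i = j then 1 else 0
    have hM : ∀ i j, M i j = M' i j + if σ i = j then 1 else 0 := by
      intro i j
      have := hσ i
      simp only [M']
      split_ifs with h
      · subst h; omega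
      · omega
    have hrow' : ∀ i, ∑ j, M' i j = n := by
      intro i
      have := hrow i
      simp only [hM, sum_add_distrib, sum_ite_eq, mem_univ, if_true] at this
      omega
    have hcol' : ∀ j, ∑ i, M' i j = n := by
      intro j
      have := hcol j
      simp only [hM, sum_add_distrib, ← eq_symm_apply, sum_ite_eq', mem_univ, if_true] at this
      omega
    obtain ⟨τ, hτ⟩ := ih hrow' hcol'
    refine ⟨Fin.cons σ τ, fun i j => ?_⟩
    rw [hM, hτ, card_filter, card_filter, Fin.sum_univ_succ, add_comm]
    simp

end IntegerBirkhoff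

theorem exists_perm_apply_eq_of_card_fiber_eq {α β : Type*} [Fintype α] [DecidableEq β]
    {f g : α → β} (h : ∀ b, #{a | f a = b} = #{a | g a = b}) :
    ∃ e : Perm α, ∀ a, f (e a) = g a :=
  ⟨ofFiberEquiv fun b => Fintype.equivOfCardEq (by simp [Fintype.card_subtype, h]),
    ofFiberEquiv_map _⟩

section ProdPerm

variable {A B : Type*} [Fintype A] [Fintype B] [DecidableEq B]

theorem sum_card_filter_snd_eq (π : Perm (A × B)) (b' : B) :
    ∑ b, #{a | (π (a, b)).2 = b'} = Fintype.card A := by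
  calc ∑ b, #{a | (π (a, b)).2 = b'} = ∑ p : A × B, if (π p).2 = b' then 1 else 0 := by
        simp only [card_filter]; rw [Fintype.sum_prod_type_right]
    _ = ∑ p : A × B, if p.2 = b' then 1 else 0 :=
        Equiv.sum_comp π fun q => if q.2 = b' then 1 else 0
    _ = Fintype.card A := by rw [Fintype.sum_prod_type]; simp

theorem exists_perms_card_filter_snd_eq (π : Perm (A × B)) :
    ∃ σ : A → Perm B, ∀ b b', #{a | (π (a, b)).2 = b'} = #{a | σ a b = b'} := by
  obtain ⟨σ, hσ⟩ := exists_perms_of_sum_eq (n := Fintype.card A)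
    (M := fun b b' => #{a | (π (a, b)).2 = b'})
    (fun b => by rw [← card_univ]; exact (card_eq_sum_card_fiberwise fun a _ => mem_univ _).symm)
    (sum_card_filter_snd_eq π)
  refine ⟨fun a => σ (Fintype.equivFin A a), fun b b' => ?_⟩
  rw [hσ]
  exact (card_equiv (Fintype.equivFin A) (by simp [mem_filter])).symm

end ProdPerm

theorem exists_eq_left_mul_right_mul_left {A B : Type*} [Finite A] [Finite B]
    (π : Perm (A × B)) :
    ∃ g₁ g₂ g₃ : Perm (A × B),
      (∀ p, (g₁ p).2 = p.2) ∧ (∀ p, (g₂ p).1 = p.1) ∧ (∀ p, (g₃ p).2 = p.2) ∧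
      ∀ p, π p = g₁ (g₂ (g₃ p)) := by
  cases nonempty_fintype A
  cases nonempty_fintype B
  classical
  obtain ⟨σ, hσ⟩ := exists_perms_card_filter_snd_eq π
  choose e he using fun b => exists_perm_apply_eq_of_card_fiber_eq (hσ b)
  set g₃ : Perm (A × B) := prodCongrLeft fun b => (e b).symm
  set g₂ : Perm (A × B) := prodCongrRight σ
  refine ⟨π * g₃⁻¹ * g₂⁻¹, g₂, g₃, fun q => ?_, fun _ => rfl, fun _ => rfl, fun p => by simp⟩
  obtain ⟨⟨a, b⟩, rfl⟩ := g₂.surjective q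
  simpa [g₂, g₃, Perm.mul_apply] using he b a

/-- For finite sets `A` and `B`, `Sym(A × B) = G_L·G_R·G_L = G_R·G_L·G_R`:
every permutation of `A × B` is a composition of three permutations alternating
between the column group `G_L` (modifying only the left coordinate) and the row
group `G_R` (modifying only the right coordinate). -/
theorem finite_alternation_diameter_three
    (A B : Type*) [Finite A] [Finite B] (π : Equiv.Perm (A × B)) :
    (∃ g₁ g₂ g₃ : Equiv.Perm (A × B),
      (∀ p, (g₁ p).2 = p.2) ∧ (∀ p, (g₂ p).1 = p.1) ∧ (∀ p, (g₃ p).2 = p.2) ∧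
      ∀ p, π p = g₁ (g₂ (g₃ p))) ∧
    (∃ h₁ h₂ h₃ : Equiv.Perm (A × B),
      (∀ p, (h₁ p).1 = p.1) ∧ (∀ p, (h₂ p).2 = p.2) ∧ (∀ p, (h₃ p).1 = p.1) ∧
      ∀ p, π p = h₁ (h₂ (h₃ p))) := by
  refine ⟨exists_eq_left_mul_right_mul_left π, ?_⟩
  let c := (prodComm B A).permCongr
  obtain ⟨g₁, g₂, g₃, h₁, h₂, h₃, hπ⟩ := exists_eq_left_mul_right_mul_left (c.symm π)
  refine ⟨c g₁, c g₂, c g₃, fun p => h₁ p.swap, fun p => h₂ p.swap, fun p => h₃ p.swap,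
    fun p => ?_⟩
  simpa [c, permCongr_apply] using congrArg Prod.swap (hπ p.swap)
end

section
/- Let α and β be sets and let r be a relation between α and β (the edge relation of a bipartite graph with left vertex set α and right vertex set β) such that for every a ∈ α the set {b ∈ β : r(a,b)} is finite, and for every b ∈ β the set {a ∈ α : r(a,b)} is finite. Assume the Hall condition on both sides: for every finite set S ⊆ α, |S| ≤ |{b ∈ β : ∃ a ∈ S, r(a,b)}|, and for every finite set T ⊆ β, |T| ≤ |{a ∈ α : ∃ b ∈ T, r(a,b)}|. Then there exists a bijection e : α → β such that r(a, e(a)) holds for every a ∈ α (a perfect matching). -/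
open Function

theorem exists_injective_of_forall_card_le_ncard {α β : Type*} (r : α → β → Prop)
    (hloc : ∀ a : α, {b : β | r a b}.Finite)
    (hall : ∀ S : Finset α, S.card ≤ {b : β | ∃ a ∈ S, r a b}.ncard) :
    ∃ f : α → β, Injective f ∧ ∀ a, r a (f a) := by
  classical
  have hbiUnion (S : Finset α) :
      S.card ≤ (S.biUnion fun a => (hloc a).toFinset).card := by
    convert hall S using 1
    rw [← Set.ncard_coe_finset]
    congr 1
    ext b
    simp
  obtain ⟨f, hf, hfr⟩ := (Finset.all_card_le_biUnion_card_iff_exists_injective _).mp hbiUnion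
  exact ⟨f, hf, fun a => (hloc a).mem_toFinset.mp (hfr a)⟩

/-- Hall's theorem for locally finite bipartite graphs: if the edge relation `r`
between `α` and `β` is locally finite and both Hall conditions hold, then there is
a perfect matching, i.e. a bijection `e : α ≃ β` with `r a (e a)` for all `a`. -/
theorem hall_infinite_perfect_matching {α β : Type*} (r : α → β → Prop)
    (hlocα : ∀ a : α, {b : β | r a b}.Finite)
    (hlocβ : ∀ b : β, {a : α | r a b}.Finite)
    (hallα : ∀ S : Finset α, (S.card : ℕ) ≤ {b : β | ∃ a ∈ S, r a b}.ncard)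
    (hallβ : ∀ T : Finset β, (T.card : ℕ) ≤ {a : α | ∃ b ∈ T, r a b}.ncard) :
    ∃ e : α ≃ β, ∀ a : α, r a (e a) := by
  obtain ⟨f, hf, hfr⟩ := exists_injective_of_forall_card_le_ncard r hlocα hallα
  obtain ⟨g, hg, hgr⟩ := exists_injective_of_forall_card_le_ncard (flip r) hlocβ hallβ
  obtain ⟨e, he, her⟩ := Embedding.schroeder_bernstein_of_rel hf hg r hfr hgr
  exact ⟨Equiv.ofBijective e he, her⟩
end

section
/- Let A be an arbitrary set, let n ≥ 1, and let N : A × A → ℕ be a matrix such that for every a ∈ A the function b ↦ N(a,b) has finite support and Σ_b N(a,b) = n, and for every b ∈ A the function a ↦ N(a,b) has finite support and Σ_a N(a,b) = n. Then there exists a permutation σ of A such that N(a, σ(a)) ≥ 1 for every a ∈ A; that is, N dominates a permutation matrix entrywise. -/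
/-!
Counting entries shows that any finite set `s` of rows meets at least `#s` columns: the rows of
`s` carry total weight `n * #s`, and the columns they meet can absorb at most `n` each. By Hall's
theorem for finite neighbourhoods there is therefore an injection `f` from rows to columns
through nonzero entries, and, by symmetry, one `g` from columns to rows. Schröder–Bernstein,
in the form that keeps every pair `(a, h a)` among the pairs `(a, f a)` and `(g b, b)`, turns
these into a bijection through nonzero entries.
-/

open Finset

section
variable {α β : Type*} {n : ℕ} {M : α → β → ℕ}

lemma sum_le_finsum_of_support_finite {f : α → ℕ} (hf : (Function.support f).Finite)
    (s : Finset α) : ∑ a ∈ s, f a ≤ ∑ᶠ a, f a := by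
  classical
  rw [finsum_eq_sum_of_support_subset f (s := s ∪ hf.toFinset) (by simp)]
  exact sum_le_sum_of_subset subset_union_left

lemma card_le_card_biUnion_rowSupport [DecidableEq β] (hn : 0 < n)
    (hrow_fin : ∀ a, (Function.support (M a)).Finite) (hrow : ∀ a, ∑ᶠ b, M a b = n)
    (hcol_fin : ∀ b, (Function.support fun a => M a b).Finite)
    (hcol : ∀ b, ∑ᶠ a, M a b ≤ n) (s : Finset α) :
    #s ≤ #(s.biUnion fun a => (hrow_fin a).toFinset) := by
  set T := s.biUnion fun a => (hrow_fin a).toFinset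
  have hrowT : ∀ a ∈ s, ∑ b ∈ T, M a b = n := fun a ha => by
    rw [← hrow a, finsum_eq_sum_of_support_subset]
    exact fun b hb => mem_biUnion.mpr ⟨a, ha, (hrow_fin a).mem_toFinset.mpr hb⟩
  refine Nat.le_of_mul_le_mul_left ?_ hn
  calc n * #s = ∑ a ∈ s, ∑ b ∈ T, M a b := by
        rw [sum_congr rfl hrowT, sum_const, smul_eq_mul, mul_comm]
    _ = ∑ b ∈ T, ∑ a ∈ s, M a b := sum_comm
    _ ≤ ∑ b ∈ T, n := sum_le_sum fun b _ =>
        (sum_le_finsum_of_support_finite (hcol_fin b) s).trans (hcol b)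
    _ = n * #T := by rw [sum_const, smul_eq_mul, mul_comm]

lemma exists_injective_forall_ne_zero_of_rowSum_eq_of_colSum_le (hn : 0 < n)
    (hrow_fin : ∀ a, (Function.support (M a)).Finite) (hrow : ∀ a, ∑ᶠ b, M a b = n)
    (hcol_fin : ∀ b, (Function.support fun a => M a b).Finite)
    (hcol : ∀ b, ∑ᶠ a, M a b ≤ n) :
    ∃ f : α → β, Function.Injective f ∧ ∀ a, M a (f a) ≠ 0 := by
  classical
  obtain ⟨f, hf_inj, hf_mem⟩ := (all_card_le_biUnion_card_iff_exists_injective _).mp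
    (card_le_card_biUnion_rowSupport hn hrow_fin hrow hcol_fin hcol)
  exact ⟨f, hf_inj, fun a => by simpa using hf_mem a⟩

end

/-- Infinite version of the matrix Hall theorem: let `N : A → A → ℕ` be a matrix
all of whose rows and columns have finite support and sum to `n ≥ 1`. Then `N`
dominates a permutation matrix entrywise. -/
theorem matrix_hall_infinite {A : Type*} (n : ℕ) (hn : 1 ≤ n) (N : A → A → ℕ)
    (hrow_fin : ∀ a : A, (Function.support fun b => N a b).Finite)
    (hrow : ∀ a : A, ∑ᶠ b, N a b = n)
    (hcol_fin : ∀ b : A, (Function.support fun a => N a b).Finite)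
    (hcol : ∀ b : A, ∑ᶠ a, N a b = n) :
    ∃ σ : Equiv.Perm A, ∀ a, 1 ≤ N a (σ a) := by
  obtain ⟨f, hf_inj, hf⟩ := exists_injective_forall_ne_zero_of_rowSum_eq_of_colSum_le hn
    hrow_fin hrow hcol_fin (fun b => (hcol b).le)
  obtain ⟨g, hg_inj, hg⟩ := exists_injective_forall_ne_zero_of_rowSum_eq_of_colSum_le
    (M := fun b a => N a b) hn hcol_fin hcol hrow_fin (fun a => (hrow a).le)
  obtain ⟨h, h_bij, hh⟩ :=
    Function.Embedding.schroeder_bernstein_of_rel hf_inj hg_inj (fun a b => N a b ≠ 0) hf hg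
  exact ⟨Equiv.ofBijective h h_bij, fun a => Nat.one_le_iff_ne_zero.mpr (hh a)⟩
end

section
/- Let A and B be arbitrary sets and let G = Sym(A × B). A permutation π of A × B belongs to the set G_R · G_L = {r ∘ l : r ∈ G_R, l ∈ G_L} if and only if for every b ∈ B the map a ↦ proj_A(π(a,b)) from A to A is bijective, where proj_A : A × B → A is the first projection. -/
/-!
A row permutation `r` leaves first coordinates alone, so `π = r ∘ l` has the same first
coordinates as the column permutation `l`, which permutes each column `A × {b}`. Conversely, the
column bijections `a ↦ (π (a, b)).1` assemble into a column permutation `l`, and `r := π ∘ l⁻¹`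
fixes first coordinates.
-/

namespace Equiv.Perm

variable {A B : Type*}

theorem snd_symm_apply_of_forall_snd_apply {l : Perm (A × B)} (hl : ∀ p, (l p).2 = p.2)
    (p : A × B) : (l.symm p).2 = p.2 := by
  simpa using (hl (l.symm p)).symm

theorem bijective_fst_apply_of_forall_snd_apply {l : Perm (A × B)} (hl : ∀ p, (l p).2 = p.2)
    (b : B) : Function.Bijective fun a => (l (a, b)).1 := by
  refine ⟨fun a a' h => ?_, fun c => ⟨(l.symm (c, b)).1, ?_⟩⟩
  · have hcol : l (a, b) = l (a', b) := Prod.ext h ((hl (a, b)).trans (hl (a', b)).symm)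
    simpa using l.injective hcol
  · have hfiber : ((l.symm (c, b)).1, b) = l.symm (c, b) :=
      Prod.ext rfl (snd_symm_apply_of_forall_snd_apply hl (c, b)).symm
    simp only [hfiber, apply_symm_apply]

theorem exists_snd_apply_eq_and_fst_apply_eq {π : Perm (A × B)}
    (h : ∀ b, Function.Bijective fun a => (π (a, b)).1) :
    ∃ l : Perm (A × B), (∀ p, (l p).2 = p.2) ∧ ∀ p, (l p).1 = (π p).1 :=
  ⟨Equiv.prodCongrLeft fun b => Equiv.ofBijective _ (h b), fun _ => rfl, fun _ => rfl⟩

end Equiv.Perm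

/-- Characterization of `G_R · G_L`: a permutation `π` of `A × B` is a composition
`r ∘ l` with `r` in the row group and `l` in the column group if and only if for
every `b` the map `a ↦ proj_A (π (a, b))` is a bijection of `A`. -/
theorem mem_GR_GL_iff {A B : Type*} (π : Equiv.Perm (A × B)) :
    (∃ r l : Equiv.Perm (A × B),
      (∀ p, (r p).1 = p.1) ∧ (∀ p, (l p).2 = p.2) ∧ ∀ p, π p = r (l p)) ↔
    ∀ b : B, Function.Bijective fun a : A => (π (a, b)).1 := by
  constructor
  · rintro ⟨r, l, hr, hl, hπ⟩ b
    have hfst : (fun a => (π (a, b)).1) = fun a => (l (a, b)).1 := by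
      funext a
      rw [hπ, hr]
    rw [hfst]
    exact Equiv.Perm.bijective_fst_apply_of_forall_snd_apply hl b
  · intro h
    obtain ⟨l, hl, hlπ⟩ := Equiv.Perm.exists_snd_apply_eq_and_fst_apply_eq h
    refine ⟨π * l⁻¹, l, fun p => ?_, hl, fun p => by simp⟩
    simp [← hlπ]
end

section
/- Let k ≥ 1, let A_1, …, A_k be finite sets, let X = A_1 × A_2 × ⋯ × A_k, and for each i let G_i ≤ Sym(X) be the subgroup of permutations that modify only the i-th coordinate. Then Sym(X) = G_k · G_{k−1} ⋯ G_2 · G_1 · G_2 ⋯ G_{k−1} · G_k; that is, every permutation π of X can be written as π = a_k ∘ a_{k−1} ∘ ⋯ ∘ a_2 ∘ a_1 ∘ b_2 ∘ ⋯ ∘ b_{k−1} ∘ b_k, where a_i ∈ G_i for 1 ≤ i ≤ k and b_i ∈ G_i for 2 ≤ i ≤ k. -/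
/-!
Write `X = W × V` with `W = A_k` and `V = A_1 × ⋯ × A_{k-1}`. Every permutation `π` of `W × V`
factors as `a * r * b` with `a`, `b` changing only the `W`-coordinate and `r` preserving it. Such
an `r` is a `W`-indexed family of permutations of `V`; induction applies to each member, and the
factorisations assemble into one because `(W → Sym V) → Sym X` is a group homomorphism.

The factorisation `π = a * r * b` is an edge colouring. The bipartite multigraph on two copies
of `V` with an edge `x.2 — (π x).2` for every `x ∈ X` is `|W|`-regular, so by Hall's theorem its
edges split into `|W|` perfect matchings. Colouring `x` by the index `c x ∈ W` of its matching
makes `B x = (c x, x.2)` and `Q x = (c x, (π x).2)` bijections, and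
`π = (π * Q⁻¹) * (Q * B⁻¹) * B`.
-/

open Finset Function

section RegularBipartite

variable {X V : Type*} {S : Finset X} {n : ℕ}

lemma card_filter_mem_eq_mul [DecidableEq V] {f : X → V} (hf : ∀ v, #{x ∈ S | f x = v} = n)
    (T : Finset V) : #{x ∈ S | f x ∈ T} = #T * n := by
  rw [card_eq_sum_card_fiberwise (f := f) (s := {x ∈ S | f x ∈ T}) (t := T)
    fun x hx => (mem_filter.mp hx).2, ← smul_eq_mul, ← sum_const]
  refine sum_congr rfl fun v hv => ?_
  rw [filter_filter, ← hf v]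
  congr 1
  exact filter_congr fun x _ => ⟨And.right, fun h => ⟨h ▸ hv, h⟩⟩

lemma exists_matching_of_card_fiber_eq [Fintype V] [DecidableEq V] {f g : X → V} (hn : 0 < n)
    (hf : ∀ v, #{x ∈ S | f x = v} = n) (hg : ∀ v, #{x ∈ S | g x = v} = n) :
    ∃ m : V → X, (∀ v, m v ∈ S ∧ f (m v) = v) ∧ Injective (g ∘ m) := by
  have hall : ∀ T : Finset V, #T ≤ #(T.biUnion fun v => {x ∈ S | f x = v}.image g) := by
    intro T
    refine Nat.le_of_mul_le_mul_right ?_ hn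
    rw [← card_filter_mem_eq_mul hf, ← card_filter_mem_eq_mul hg]
    refine card_le_card fun x hx => ?_
    simp only [mem_filter, mem_biUnion, mem_image] at hx ⊢
    exact ⟨hx.1, f x, hx.2, x, ⟨hx.1, rfl⟩, rfl⟩
  obtain ⟨h, hinj, hh⟩ := (all_card_le_biUnion_card_iff_exists_injective _).mp hall
  choose m hm hgm using fun v => mem_image.mp (hh v)
  refine ⟨m, fun v => mem_filter.mp (hm v), ?_⟩
  simpa [comp_def, hgm] using hinj

lemma card_filter_sdiff_image_eq_sub_one [Fintype V] [DecidableEq V] [DecidableEq X] {m : V → X}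
    (hm : ∀ v, m v ∈ S) {h : X → V} (hh : Bijective (h ∘ m)) (v : V) :
    #{x ∈ S \ univ.image m | h x = v} = #{x ∈ S | h x = v} - 1 := by
  obtain ⟨u, hu⟩ := hh.2 v
  have : {x ∈ S \ univ.image m | h x = v} = {x ∈ S | h x = v}.erase (m u) := by
    ext x
    simp only [mem_filter, mem_sdiff, mem_image, mem_univ, true_and, mem_erase, not_exists]
    constructor
    · rintro ⟨⟨hx, hxm⟩, hxv⟩
      exact ⟨fun hxu => hxm u hxu.symm, hx, hxv⟩
    · rintro ⟨hxu, hx, hxv⟩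
      refine ⟨⟨hx, fun u' hu' => hxu ?_⟩, hxv⟩
      subst hu'
      exact congrArg m (hh.1 (hxv.trans hu.symm))
  rw [this, card_erase_of_mem (mem_filter.mpr ⟨hm u, hu⟩)]

lemma injOn_ite_mem [DecidableEq X] {M : Finset X} {h : X → V} {c : X → ℕ}
    (hM : Set.InjOn h M) (hc : ∀ x ∈ S \ M, c x < n)
    (hS : Set.InjOn (fun x => (h x, c x)) ↑(S \ M)) :
    Set.InjOn (fun x => (h x, if x ∈ M then n else c x)) S := by
  intro x hx y hy hxy
  obtain ⟨hxy, hcxy⟩ := Prod.mk.inj hxy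
  by_cases hxM : x ∈ M <;> by_cases hyM : y ∈ M <;> simp only [hxM, hyM, if_true, if_false] at hcxy
  · exact hM hxM hyM hxy
  · exact absurd hcxy (hc y (mem_sdiff.mpr ⟨hy, hyM⟩)).ne'
  · exact absurd hcxy (hc x (mem_sdiff.mpr ⟨hx, hxM⟩)).ne
  · exact hS (mem_sdiff.mpr ⟨hx, hxM⟩) (mem_sdiff.mpr ⟨hy, hyM⟩) (Prod.ext hxy hcxy)

theorem exists_coloring_injOn_of_card_fiber_eq [Fintype V] [DecidableEq V] [DecidableEq X]
    (f g : X → V) (hf : ∀ v, #{x ∈ S | f x = v} = n) (hg : ∀ v, #{x ∈ S | g x = v} = n) :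
    ∃ c : X → ℕ, (∀ x ∈ S, c x < n) ∧
      Set.InjOn (fun x => (f x, c x)) S ∧ Set.InjOn (fun x => (g x, c x)) S := by
  induction n generalizing S with
  | zero =>
    have hS : S = ∅ := eq_empty_of_forall_notMem fun x hx =>
      (card_pos.mpr ⟨x, mem_filter.mpr ⟨hx, rfl⟩⟩ : 0 < #{y ∈ S | f y = f x}).ne' (hf (f x))
    exact ⟨fun _ => 0, by simp [hS], by simp [hS], by simp [hS]⟩
  | succ n ih =>
    obtain ⟨m, hm, hgm⟩ := exists_matching_of_card_fiber_eq n.succ_pos hf hg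
    have hfm : Bijective (f ∘ m) := (funext fun v => (hm v).2 : f ∘ m = id) ▸ bijective_id
    have hgm : Bijective (g ∘ m) := Finite.injective_iff_bijective.mp hgm
    set M := univ.image m
    obtain ⟨c, hc, hcf, hcg⟩ := ih (S := S \ M)
      (fun v => by rw [card_filter_sdiff_image_eq_sub_one (fun v => (hm v).1) hfm, hf]; rfl)
      (fun v => by rw [card_filter_sdiff_image_eq_sub_one (fun v => (hm v).1) hgm, hg]; rfl)
    refine ⟨fun x => if x ∈ M then n else c x, fun x hx => ?_,
      injOn_ite_mem (by simpa [M] using hfm.1.injOn_range) hc hcf,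
      injOn_ite_mem (by simpa [M] using hgm.1.injOn_range) hc hcg⟩
    by_cases hxM : x ∈ M
    · simp [hxM]
    · simpa [hxM] using (hc x (mem_sdiff.mpr ⟨hx, hxM⟩)).trans n.lt_succ_self

end RegularBipartite

def Equiv.Perm.prodCongrRightHom (α β : Type*) : (α → Perm β) →* Perm (α × β) where
  toFun := prodCongrRight
  map_one' := by ext <;> simp
  map_mul' _ _ := by ext <;> simp

lemma Equiv.Perm.exists_prodCongrRight_eq {α β : Type*} {r : Perm (α × β)}
    (hr : ∀ x, (r x).1 = x.1) : ∃ ρ : α → Perm β, r = prodCongrRight ρ := by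
  have hr' : ∀ x, (r.symm x).1 = x.1 := fun x => by
    simpa using (hr (r.symm x)).symm
  have mk_snd : ∀ s : Perm (α × β), (∀ x, (s x).1 = x.1) → ∀ a b, (a, (s (a, b)).2) = s (a, b) :=
    fun s hs a b => Prod.ext (hs (a, b)).symm rfl
  refine ⟨fun a => ⟨fun b => (r (a, b)).2, fun b => (r.symm (a, b)).2, fun b => ?_, fun b => ?_⟩,
    ?_⟩
  · simp [mk_snd r hr]
  · simp [mk_snd r.symm hr']
  · ext x <;> simp [hr]

lemma card_filter_perm_snd_eq {α β : Type*} [Fintype α] [Fintype β] [DecidableEq β]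
    (π : Equiv.Perm (α × β)) (w : β) : #{x | (π x).2 = w} = Fintype.card α := by
  rw [← Fintype.card_subtype,
    Fintype.card_congr (π.subtypeEquiv (p := fun x => (π x).2 = w) (q := (·.2 = w)) fun _ => .rfl)]
  exact Fintype.card_congr ⟨fun y => y.1.1, fun a => ⟨(a, w), rfl⟩, fun y => by
    obtain ⟨⟨a, _⟩, rfl⟩ := y; rfl, fun a => rfl⟩

open Equiv in
theorem Equiv.Perm.exists_eq_mul_prodCongrRight_mul {α β : Type*} [Finite α] [Finite β]
    (π : Perm (α × β)) :
    ∃ (a b : Perm (α × β)) (ρ : α → Perm β),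
      (∀ x, (a x).2 = x.2) ∧ (∀ x, (b x).2 = x.2) ∧ π = a * prodCongrRight ρ * b := by
  classical
  cases nonempty_fintype α
  cases nonempty_fintype β
  obtain ⟨c, hc, hcB, hcQ⟩ := exists_coloring_injOn_of_card_fiber_eq (S := univ)
    Prod.snd (fun x => (π x).2) (card_filter_perm_snd_eq 1) (card_filter_perm_snd_eq π)
  let col : α × β → α := fun x => (Fintype.equivFin α).symm ⟨c x, hc x (mem_univ x)⟩
  have hbij : ∀ h : α × β → β, Set.InjOn (fun x => (h x, c x)) ↑(univ : Finset (α × β)) →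
      Bijective fun x => (col x, h x) := by
    refine fun h hh => Finite.injective_iff_bijective.mp fun x y hxy => hh (by simp) (by simp) ?_
    obtain ⟨hcxy, hhxy⟩ := Prod.mk.inj hxy
    simpa [col, hhxy] using hcxy
  let B := ofBijective _ (hbij _ hcB)
  let Q := ofBijective _ (hbij _ hcQ)
  obtain ⟨ρ, hρ⟩ := Perm.exists_prodCongrRight_eq (r := Q * B⁻¹) fun x => by
    obtain ⟨y, rfl⟩ := B.surjective x
    simp [B, Q]
  refine ⟨π * Q⁻¹, B, ρ, fun x => ?_, fun x => rfl, by rw [← hρ]; group⟩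
  obtain ⟨y, rfl⟩ := Q.surjective x
  simp [Q]

section AlternatingProd

variable {M N : Type*} [Monoid M] [Monoid N]

/-- `a (k-1) * ⋯ * a 0 * b 1 * ⋯ * b (k-1)`; the entry `b 0` does not occur. -/
def alternatingProd {k : ℕ} (a b : Fin k → M) : M :=
  ((List.ofFn a).reverse ++ (List.ofFn b).drop 1).prod

@[simp]
lemma alternatingProd_fin_one (a b : Fin 1 → M) : alternatingProd a b = a 0 := by
  simp [alternatingProd]

lemma alternatingProd_snoc {k : ℕ} (a b : Fin (k + 1) → M) (x y : M) :
    alternatingProd (Fin.snoc a x) (Fin.snoc b y) = x * alternatingProd a b * y := by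
  simp only [alternatingProd, List.ofFn_succ' (Fin.snoc _ _), Fin.snoc_castSucc, Fin.snoc_last,
    List.concat_eq_append, List.reverse_append, List.drop_append_of_le_length
      (by simp : 1 ≤ (List.ofFn b).length)]
  simp [mul_assoc]

lemma map_alternatingProd {F : Type*} [FunLike F M N] [MonoidHomClass F M N] (φ : F) {k : ℕ}
    (a b : Fin k → M) : φ (alternatingProd a b) = alternatingProd (φ ∘ a) (φ ∘ b) := by
  simp [alternatingProd, map_list_prod, List.map_reverse, List.map_ofFn]

end AlternatingProd

/-- Membership in the paper's `G_i`. -/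
def Equiv.Perm.ChangesOnly {ι : Type*} {A : ι → Type*} (g : Perm (∀ i, A i)) (i : ι) : Prop :=
  ∀ x j, j ≠ i → g x j = x j

namespace Equiv.Perm

section SplitLast

variable {k : ℕ} (A : Fin (k + 1) → Type*)

def initFiberwiseHom : (A (Fin.last k) → Perm (∀ i : Fin k, A i.castSucc)) →* Perm (∀ i, A i) :=
  (Fin.snocEquiv A).permCongrHom.toMonoidHom.comp (prodCongrRightHom _ _)

variable {A}

lemma changesOnly_snoc_initFiberwiseHom {c₀ : Perm (A (Fin.last k) × ∀ i : Fin k, A i.castSucc)}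
    {c : A (Fin.last k) → Fin k → Perm (∀ i : Fin k, A i.castSucc)}
    (h₀ : ∀ x, (c₀ x).2 = x.2) (hc : ∀ w i, (c w i).ChangesOnly i) (i : Fin (k + 1)) :
    (Fin.snoc (α := fun _ => Perm (∀ i, A i)) (fun i => initFiberwiseHom A fun w => c w i)
      ((Fin.snocEquiv A).permCongr c₀) i).ChangesOnly i := by
  intro x j hj
  induction i using Fin.lastCases with
  | last =>
    obtain ⟨j, rfl⟩ := Fin.exists_castSucc_eq.mpr hj
    simp [h₀, Fin.init]
  | cast i =>
    induction j using Fin.lastCases with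
    | last => simp [initFiberwiseHom, prodCongrRightHom]
    | cast j =>
      simp [initFiberwiseHom, prodCongrRightHom, hc _ i _ j (by simpa using hj), Fin.init]

end SplitLast

theorem exists_changesOnly_alternatingProd_eq {k : ℕ} (A : Fin (k + 1) → Type*)
    [∀ i, Finite (A i)] (π : Perm (∀ i, A i)) :
    ∃ a b : Fin (k + 1) → Perm (∀ i, A i),
      (∀ i, (a i).ChangesOnly i) ∧ (∀ i, (b i).ChangesOnly i) ∧ π = alternatingProd a b := by
  induction k with
  | zero =>
    have changesOnly (g : Perm (∀ i, A i)) (i : Fin 1) : g.ChangesOnly i :=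
      fun _ j hj => absurd (Subsingleton.elim (α := Fin 1) j i) hj
    exact ⟨fun _ => π, fun _ => 1, changesOnly π, changesOnly 1, by simp⟩
  | succ k ih =>
    set e := Fin.snocEquiv A
    obtain ⟨a₀, b₀, ρ, ha₀, hb₀, hπ⟩ := (e.symm.permCongr π).exists_eq_mul_prodCongrRight_mul
    choose a b ha hb hρ using fun w => ih (fun i => A i.castSucc) (ρ w)
    have hρ' : ρ = alternatingProd (fun i w => a w i) (fun i w => b w i) :=
      funext fun w => (hρ w).trans (map_alternatingProd (Pi.evalMonoidHom _ w)
        (fun i w => a w i) (fun i w => b w i)).symm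
    refine ⟨Fin.snoc (fun i => initFiberwiseHom A fun w => a w i) (e.permCongr a₀),
      Fin.snoc (fun i => initFiberwiseHom A fun w => b w i) (e.permCongr b₀),
      changesOnly_snoc_initFiberwiseHom ha₀ ha, changesOnly_snoc_initFiberwiseHom hb₀ hb, ?_⟩
    calc π = e.permCongrHom (e.symm.permCongr π) := by ext; simp
      _ = e.permCongr a₀ * initFiberwiseHom A ρ * e.permCongr b₀ := by
        rw [hπ, map_mul, map_mul]; rfl
      _ = _ := by rw [hρ', map_alternatingProd, alternatingProd_snoc]; rfl

end Equiv.Perm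

theorem finite_product_alternation_general (k : ℕ) (A : Fin k → Type*)
    [∀ i, Finite (A i)] (π : Equiv.Perm (∀ i, A i)) :
    ∃ a b : Fin k → Equiv.Perm (∀ i, A i),
      (∀ i, ∀ x, ∀ j, j ≠ i → a i x j = x j) ∧
      (∀ i, ∀ x, ∀ j, j ≠ i → b i x j = x j) ∧
      π = ((List.ofFn a).reverse ++ (List.ofFn b).drop 1).prod := by
  cases k with
  | zero => exact ⟨finZeroElim, finZeroElim, finZeroElim, finZeroElim, Subsingleton.elim _ _⟩
  | succ k => exact Equiv.Perm.exists_changesOnly_alternatingProd_eq A π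

/-- For a product `X = A₁ × ⋯ × A_k` of finite sets, every permutation of `X` lies in
`G_k ⋯ G_2 · G_1 · G_2 ⋯ G_k`, i.e. it can be written as
`a_k ∘ ⋯ ∘ a_2 ∘ a_1 ∘ b_2 ∘ ⋯ ∘ b_k` with `a_i, b_i ∈ G_i`, where `G_i` is the
subgroup of permutations modifying only the `i`-th coordinate.
(Here `(List.ofFn a).reverse.prod = a_k * ⋯ * a_1` and
`((List.ofFn b).drop 1).prod = b_2 * ⋯ * b_k`, with `*` denoting composition.) -/
theorem finite_product_alternation (k : ℕ) (hk : 1 ≤ k) (A : Fin k → Type*)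
    [∀ i, Finite (A i)] (π : Equiv.Perm (∀ i, A i)) :
    ∃ a b : Fin k → Equiv.Perm (∀ i, A i),
      (∀ i, ∀ x, ∀ j, j ≠ i → a i x j = x j) ∧
      (∀ i, ∀ x, ∀ j, j ≠ i → b i x j = x j) ∧
      π = ((List.ofFn a).reverse ++ (List.ofFn b).drop 1).prod :=
  finite_product_alternation_general k A π
end

section
/- Let k ≥ 1, let A_1, …, A_k be finite sets each of cardinality at least 2, let X = A_1 × ⋯ × A_k, and for each i let G_i ≤ Sym(X) be the subgroup of permutations that modify only the i-th coordinate. Then for every ℓ < 2k − 1 and every sequence i_1, …, i_ℓ of indices in {1, …, k}, not every permutation of X is of the form g_ℓ ∘ g_{ℓ−1} ∘ ⋯ ∘ g_1 with g_j ∈ G_{i_j} for each j; that is, Sym(X) ≠ G_{i_ℓ} ⋯ G_{i_1}. -/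
/-!
Let `u, v ∈ X` differ in every coordinate. If the transposition `(u v)` were a product `R * Q`
with `Q` fixing coordinate `m` and `R` fixing coordinate `m'`, then `x ↦ (x m, (u v) x m')`
would equal `x ↦ (Q x m, Q x m')`, so its fibres would have the same sizes as those of
`x ↦ (x m, x m')`; but the fibre over `(v m, u m')` gains exactly the point `v`.
A word of length at most `2k - 2` splits into two halves of length at most `k - 1`, each missing
some coordinate, so its product is such an `R * Q`.
-/

namespace Equiv.Perm

variable {ι : Type*} {A : ι → Type*}

variable (A) in
def coordStabilizer (c : ι) : Subgroup (Perm (∀ i, A i)) where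
  carrier := {p | ∀ x, p x c = x c}
  mul_mem' hp hq x := (hp _).trans (hq x)
  one_mem' _ := rfl
  inv_mem' {p} hp x := by simpa using (hp (p⁻¹ x)).symm

theorem ncard_setOf_mul_apply_eq {m m' : ι} {Q R : Perm (∀ i, A i)}
    (hQ : Q ∈ coordStabilizer A m) (hR : R ∈ coordStabilizer A m') (a : A m) (b : A m') :
    {x | x m = a ∧ (R * Q) x m' = b}.ncard = {x : ∀ i, A i | x m = a ∧ x m' = b}.ncard := by
  have hpre : {x | x m = a ∧ (R * Q) x m' = b} = Q ⁻¹' {y | y m = a ∧ y m' = b} := by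
    ext x
    simp [hQ x, hR (Q x)]
  rw [hpre, Set.ncard_preimage_of_injective_subset_range Q.injective (by simp)]

theorem ncard_setOf_swap_apply {X α β : Type*} [Finite X] [DecidableEq X] (f : X → α) (g : X → β)
    {u v : X} (hf : f u ≠ f v) (hg : g u ≠ g v) :
    {x | f x = f v ∧ g (swap u v x) = g u}.ncard = {x | f x = f v ∧ g x = g u}.ncard + 1 := by
  have hinsert :
      {x | f x = f v ∧ g (swap u v x) = g u} = insert v {x | f x = f v ∧ g x = g u} := by
    ext x
    rcases eq_or_ne x u with rfl | hxu
    · simp [hf, ne_of_apply_ne f hf]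
    rcases eq_or_ne x v with rfl | hxv
    · simp
    simp [swap_apply_of_ne_of_ne hxu hxv, hxv]
  rw [hinsert, Set.ncard_insert_of_notMem (by simp [hg.symm])]

theorem swap_ne_mul_of_mem_coordStabilizer [Finite (∀ i, A i)] [DecidableEq (∀ i, A i)]
    {m m' : ι} {u v : ∀ i, A i} (hm : u m ≠ v m) (hm' : u m' ≠ v m') {Q R : Perm (∀ i, A i)}
    (hQ : Q ∈ coordStabilizer A m) (hR : R ∈ coordStabilizer A m') : swap u v ≠ R * Q := by
  intro h
  have hfibre := ncard_setOf_mul_apply_eq hQ hR (v m) (u m')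
  have hswap := ncard_setOf_swap_apply (fun x : ∀ i, A i => x m) (fun x => x m') hm hm'
  rw [h] at hswap
  omega

theorem exists_finset_card_le_forall_notMem_list_prod_mem {L : List (Perm (∀ i, A i))}
    (hL : ∀ p ∈ L, ∃ c, ∀ c' ≠ c, p ∈ coordStabilizer A c') :
    ∃ S : Finset ι, S.card ≤ L.length ∧ ∀ m ∉ S, L.prod ∈ coordStabilizer A m := by
  classical
  induction L with
  | nil => exact ⟨∅, by simp, fun m _ => one_mem _⟩
  | cons p L ih =>
    obtain ⟨c, hc⟩ := hL p List.mem_cons_self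
    obtain ⟨S, hS, hSL⟩ := ih fun q hq => hL q (List.mem_cons_of_mem p hq)
    refine ⟨insert c S, (Finset.card_insert_le c S).trans (by simpa using hS), fun m hm => ?_⟩
    rw [Finset.mem_insert, not_or] at hm
    exact mul_mem (hc m hm.1) (hSL m hm.2)

theorem exists_list_prod_mem_coordStabilizer [Fintype ι] {L : List (Perm (∀ i, A i))}
    (hL : ∀ p ∈ L, ∃ c, ∀ c' ≠ c, p ∈ coordStabilizer A c') (hlen : L.length < Fintype.card ι) :
    ∃ m, L.prod ∈ coordStabilizer A m := by
  obtain ⟨S, hS, hSL⟩ := exists_finset_card_le_forall_notMem_list_prod_mem hL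
  obtain ⟨m, -, hm⟩ := Finset.exists_mem_notMem_of_card_lt_card (t := Finset.univ)
    (hS.trans_lt (hlen.trans_eq Finset.card_univ.symm))
  exact ⟨m, hSL m hm⟩

theorem swap_ne_list_prod [Fintype ι] [∀ i, Finite (A i)] [DecidableEq (∀ i, A i)]
    {u v : ∀ i, A i} (huv : ∀ i, u i ≠ v i) {L : List (Perm (∀ i, A i))}
    (hL : ∀ p ∈ L, ∃ c, ∀ c' ≠ c, p ∈ coordStabilizer A c')
    (hlen : L.length + 1 < 2 * Fintype.card ι) : swap u v ≠ L.prod := by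
  set n := Fintype.card ι - 1
  obtain ⟨m', hR⟩ := exists_list_prod_mem_coordStabilizer (L := L.take n)
    (fun p hp => hL p (List.mem_of_mem_take hp)) (by rw [List.length_take]; omega)
  obtain ⟨m, hQ⟩ := exists_list_prod_mem_coordStabilizer (L := L.drop n)
    (fun p hp => hL p (List.mem_of_mem_drop hp)) (by rw [List.length_drop]; omega)
  rw [← L.take_append_drop n, List.prod_append]
  exact swap_ne_mul_of_mem_coordStabilizer (huv m) (huv m') hQ hR

end Equiv.Perm

theorem finite_product_alternation_lower_bound_general (k : ℕ)
    (A : Fin k → Type*) [∀ i, Finite (A i)] [∀ i, Nontrivial (A i)]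
    (ℓ : ℕ) (hℓ : ℓ < 2 * k - 1) (i : Fin ℓ → Fin k) :
    ¬ ∀ π : Equiv.Perm (∀ i, A i),
        ∃ g : Fin ℓ → Equiv.Perm (∀ i, A i),
          (∀ j : Fin ℓ, ∀ x, ∀ j' : Fin k, j' ≠ i j → g j x j' = x j') ∧
          π = ((List.ofFn g).reverse).prod := by
  classical
  intro h
  choose u v huv using fun c => exists_pair_ne (A c)
  obtain ⟨g, hg, hswap⟩ := h (Equiv.swap u v)
  have hlen : ((List.ofFn g).reverse).length + 1 < 2 * Fintype.card (Fin k) := by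
    rw [List.length_reverse, List.length_ofFn, Fintype.card_fin]
    omega
  refine Equiv.Perm.swap_ne_list_prod huv (fun p hp => ?_) hlen hswap
  obtain ⟨j, rfl⟩ := List.mem_ofFn.mp (List.mem_reverse.mp hp)
  exact ⟨i j, fun c hc x => hg j x c hc⟩

/-- For a product `X = A₁ × ⋯ × A_k` of finite sets each with at least two elements,
no composition sequence of fewer than `2k - 1` of the groups `G_i` (permutations
modifying only the `i`-th coordinate) yields all of `Sym(X)`:
for every `ℓ < 2k - 1` and every sequence `i : Fin ℓ → Fin k`, not every permutation
`π` of `X` can be written as `g_ℓ ∘ ⋯ ∘ g_1` with `g_j ∈ G_{i j}`.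
(Here `(List.ofFn g).reverse.prod = g_ℓ * ⋯ * g_1`, with `*` denoting composition.) -/
theorem finite_product_alternation_lower_bound (k : ℕ) (hk : 1 ≤ k)
    (A : Fin k → Type*) [∀ i, Finite (A i)] [∀ i, Nontrivial (A i)]
    (ℓ : ℕ) (hℓ : ℓ < 2 * k - 1) (i : Fin ℓ → Fin k) :
    ¬ ∀ π : Equiv.Perm (∀ i, A i),
        ∃ g : Fin ℓ → Equiv.Perm (∀ i, A i),
          (∀ j : Fin ℓ, ∀ x, ∀ j' : Fin k, j' ≠ i j → g j x j' = x j') ∧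
          π = ((List.ofFn g).reverse).prod :=
  finite_product_alternation_lower_bound_general k A ℓ hℓ i
end

section
/- Let k ≥ 1, let A_1, …, A_k be finite sets each of cardinality at least 2, let X = A_1 × ⋯ × A_k, and for each i let G_i ≤ Sym(X) be the subgroup of permutations that modify only the i-th coordinate. Let i_1, …, i_ℓ be any sequence of indices in {1, …, k} in which there exist two distinct indices a ≠ b that each occur at most once in the sequence. Then not every permutation of X is of the form g_ℓ ∘ g_{ℓ−1} ∘ ⋯ ∘ g_1 with g_j ∈ G_{i_j} for each j; that is, Sym(X) ≠ G_{i_ℓ} ⋯ G_{i_1}. -/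
/-!
Let `Fix c` be the group of permutations preserving the `c`-th coordinate. Since `p` and `q` each
occur at most once, the sequence splits into an initial segment avoiding `q` and a final segment
avoiding `p` (or the same with `p` and `q` exchanged), so every product `g_ℓ ⋯ g_1` lies in
`Fix p · Fix q`. This set misses the transposition of two points `x, y` differing in both
coordinates: for `σ ∈ Fix p` and `τ ∈ Fix q`, the points `z` with `z q = x q` and `(σ τ z) p = y p`
form the `τ`-preimage of `S = {z | z q = x q ∧ z p = y p}`, whereas for the transposition they
form `insert x S`, which is one element larger.
-/

open Equiv Pointwise

section Split

variable {β : Type*} {ℓ : ℕ} (f : Fin ℓ → β) {p q : β}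

lemma exists_split_of_forall_lt (hp : ∀ j j', f j = p → f j' = p → j = j')
    (hlt : ∀ j j', f j = p → f j' = q → j < j') :
    ∃ s : ℕ, (∀ j : Fin ℓ, j < s → f j ≠ q) ∧ (∀ j : Fin ℓ, s ≤ j → f j ≠ p) := by
  by_cases hP : ∃ jp, f jp = p
  · obtain ⟨jp, hjp⟩ := hP
    refine ⟨jp + 1, fun j hj hjq => ?_, fun j hj hj' => ?_⟩
    · have := hlt jp j hjp hjq
      omega
    · have := hp j jp hj' hjp
      omega
  · push Not at hP
    exact ⟨0, fun j hj => absurd hj (Nat.not_lt_zero _), fun j _ => hP j⟩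

lemma exists_split_of_card_filter_le_one [DecidableEq β] (hpq : p ≠ q)
    (hp : (Finset.univ.filter fun j => f j = p).card ≤ 1)
    (hq : (Finset.univ.filter fun j => f j = q).card ≤ 1) :
    (∃ s : ℕ, (∀ j : Fin ℓ, j < s → f j ≠ q) ∧ (∀ j : Fin ℓ, s ≤ j → f j ≠ p)) ∨
      (∃ s : ℕ, (∀ j : Fin ℓ, j < s → f j ≠ p) ∧ (∀ j : Fin ℓ, s ≤ j → f j ≠ q)) := by
  have hp' : ∀ j j', f j = p → f j' = p → j = j' := fun j j' hj hj' =>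
    Finset.card_le_one.mp hp j (by simpa using hj) j' (by simpa using hj')
  have hq' : ∀ j j', f j = q → f j' = q → j = j' := fun j j' hj hj' =>
    Finset.card_le_one.mp hq j (by simpa using hj) j' (by simpa using hj')
  by_cases hlt : ∀ j j', f j = p → f j' = q → j < j'
  · exact .inl (exists_split_of_forall_lt f hp' hlt)
  · push Not at hlt
    obtain ⟨jp, jq, hjp, hjq, hle⟩ := hlt
    refine .inr (exists_split_of_forall_lt f hq' fun j j' hj hj' => ?_)
    obtain rfl := hq' j jq hj hjq
    obtain rfl := hp' j' jp hj' hjp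
    exact hle.lt_of_ne fun h => hpq (hjp ▸ hjq ▸ congrArg f h.symm)

end Split

lemma list_ofFn_reverse_prod_mem_mul {G : Type*} [Group G] {ℓ : ℕ} (g : Fin ℓ → G)
    (H K : Subgroup G) (s : ℕ) (hK : ∀ j : Fin ℓ, j < s → g j ∈ K)
    (hH : ∀ j : Fin ℓ, s ≤ j → g j ∈ H) :
    (List.ofFn g).reverse.prod ∈ (H : Set G) * K := by
  rw [← List.take_append_drop s (List.ofFn g), List.reverse_append, List.prod_append]
  refine Set.mul_mem_mul (H.list_prod_mem fun a ha => ?_) (K.list_prod_mem fun a ha => ?_)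
  · obtain ⟨j, hj, rfl⟩ := List.mem_drop_iff_getElem.mp (List.mem_reverse.mp ha)
    simp only [List.getElem_ofFn]
    exact hH _ (by simp)
  · obtain ⟨j, hj, rfl⟩ := List.mem_take_iff_getElem.mp (List.mem_reverse.mp ha)
    simp only [List.getElem_ofFn]
    exact hK _ (by simp at hj ⊢; omega)

section CoordFixer

variable {ι : Type*} (A : ι → Type*)

def coordFixer (c : ι) : Subgroup (Perm (∀ i, A i)) where
  carrier := {f | ∀ x, f x c = x c}
  one_mem' _ := rfl
  mul_mem' hf hg x := (hf _).trans (hg x)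
  inv_mem' {f} hf x := by simpa using (hf (f⁻¹ x)).symm

variable {A}

lemma swap_notMem_coordFixer_mul [Finite (∀ i, A i)] [DecidableEq (∀ i, A i)] {p q : ι}
    {x y : ∀ i, A i} (hp : x p ≠ y p) (hq : x q ≠ y q) :
    swap x y ∉ (coordFixer A p : Set (Perm (∀ i, A i))) * coordFixer A q := by
  rintro ⟨σ, hσ, τ, hτ, hστ⟩
  set S : Set (∀ i, A i) := {z | z q = x q ∧ z p = y p}
  have hpre : {z | z q = x q ∧ swap x y z p = y p} = τ ⁻¹' S := by
    ext z
    simp [S, ← hστ, hσ (τ z), hτ z]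
  have hins : {z | z q = x q ∧ swap x y z p = y p} = insert x S := by
    ext z
    rcases eq_or_ne z x with rfl | hzx
    · simp [S]
    rcases eq_or_ne z y with rfl | hzy
    · simp [S, hzx, Ne.symm hq]
    · simp [S, swap_apply_of_ne_of_ne hzx hzy, hzx]
  have := Set.ncard_preimage_of_injective_subset_range τ.injective (s := S) (by simp)
  rw [← hpre, hins, Set.ncard_insert_of_notMem (fun h => hp h.2) (Set.toFinite S)] at this
  omega

end CoordFixer

theorem finite_product_alternation_two_rare_indices_general (k : ℕ)
    (A : Fin k → Type*) [∀ i, Finite (A i)] [∀ i, Nontrivial (A i)]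
    (ℓ : ℕ) (i : Fin ℓ → Fin k) (p q : Fin k) (hpq : p ≠ q)
    (hp : (Finset.univ.filter fun j : Fin ℓ => i j = p).card ≤ 1)
    (hq : (Finset.univ.filter fun j : Fin ℓ => i j = q).card ≤ 1) :
    ¬ ∀ π : Equiv.Perm (∀ i, A i),
        ∃ g : Fin ℓ → Equiv.Perm (∀ i, A i),
          (∀ j : Fin ℓ, ∀ x, ∀ j' : Fin k, j' ≠ i j → g j x j' = x j') ∧
          π = ((List.ofFn g).reverse).prod := by
  classical
  intro hall
  choose x y hxy using fun c => exists_pair_ne (A c)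
  obtain ⟨g, hg, hπ⟩ := hall (swap x y)
  have hfix {c : Fin k} {j : Fin ℓ} (hj : i j ≠ c) : g j ∈ coordFixer A c :=
    fun z => hg j z c hj.symm
  rcases exists_split_of_card_filter_le_one i hpq hp hq with ⟨s, hq', hp'⟩ | ⟨s, hp', hq'⟩
  · refine swap_notMem_coordFixer_mul (hxy p) (hxy q) (hπ ▸ ?_)
    exact list_ofFn_reverse_prod_mem_mul g _ _ s (fun j hj => hfix (hq' j hj))
      fun j hj => hfix (hp' j hj)
  · refine swap_notMem_coordFixer_mul (hxy q) (hxy p) (hπ ▸ ?_)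
    exact list_ofFn_reverse_prod_mem_mul g _ _ s (fun j hj => hfix (hp' j hj))
      fun j hj => hfix (hq' j hj)

/-- For a product `X = A₁ × ⋯ × A_k` of finite sets each with at least two elements,
if `i₁, …, i_ℓ` is a sequence of indices in which two distinct indices `p ≠ q` each
occur at most once, then not every permutation `π` of `X` can be written as
`g_ℓ ∘ ⋯ ∘ g_1` with `g_j ∈ G_{i_j}` (where `G_i` is the subgroup of permutations
modifying only the `i`-th coordinate).
(Here `(List.ofFn g).reverse.prod = g_ℓ * ⋯ * g_1`, with `*` denoting composition.) -/
theorem finite_product_alternation_two_rare_indices (k : ℕ) (hk : 1 ≤ k)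
    (A : Fin k → Type*) [∀ i, Finite (A i)] [∀ i, Nontrivial (A i)]
    (ℓ : ℕ) (i : Fin ℓ → Fin k) (p q : Fin k) (hpq : p ≠ q)
    (hp : (Finset.univ.filter fun j : Fin ℓ => i j = p).card ≤ 1)
    (hq : (Finset.univ.filter fun j : Fin ℓ => i j = q).card ≤ 1) :
    ¬ ∀ π : Equiv.Perm (∀ i, A i),
        ∃ g : Fin ℓ → Equiv.Perm (∀ i, A i),
          (∀ j : Fin ℓ, ∀ x, ∀ j' : Fin k, j' ≠ i j → g j x j' = x j') ∧
          π = ((List.ofFn g).reverse).prod :=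
  finite_product_alternation_two_rare_indices_general k A ℓ i p q hpq hp hq
end

section
/- Let k ≥ 1, let A_1, …, A_k be arbitrary sets, let X = A_1 × ⋯ × A_k, and let Sym_0(X) be the group of permutations of X with finite support (those π with {x : π(x) ≠ x} finite). For each i let G_i ≤ Sym_0(X) be the subgroup of finite-support permutations that modify only the i-th coordinate. Then Sym_0(X) = G_k · G_{k−1} ⋯ G_2 · G_1 · G_2 ⋯ G_{k−1} · G_k; that is, every finite-support permutation π of X can be written as π = a_k ∘ ⋯ ∘ a_2 ∘ a_1 ∘ b_2 ∘ ⋯ ∘ b_k with a_i ∈ G_i for 1 ≤ i ≤ k and b_i ∈ G_i for 2 ≤ i ≤ k. -/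
/-!
Peel off one coordinate at a time. Write the product as `Z × Y` with `Z` the coordinate in
question. A finite-support `π` preserves the finite grid `Z₀ × Y₀` spanned by its support; view
each grid point `p` as an edge from row `p.2` to row `(π p).2` of a `#Z₀`-regular bipartite
multigraph. König's theorem colours these edges by `Z₀` so that every row meets every colour
exactly once at either end, i.e. `d p = (χ p, p.2)` and `M p = (χ p, (π p).2)` are permutations.
Then `π = (π M⁻¹) (M d⁻¹) d`, where the outer factors change only the `Z`-coordinate and the
middle one fixes it, together with every coordinate of `Y` that `π` fixes. Induction on the
number of coordinates that may move gives `π = a_k ⋯ a_1 b_2 ⋯ b_k`.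
-/

open Finset

section EdgeColoring

variable {α V : Type*} [DecidableEq V] {E M : Finset α} {f g h : α → V} {r : ℕ}

/- A finset `E` with maps `f g : α → V` is a bipartite multigraph whose edge `e` joins `f e` on
the left to `g e` on the right; `#{e' ∈ E | f e' = f e} = r` says that `f e` has degree `r`. -/

theorem card_eq_mul_card_image_of_card_fiber (hf : ∀ e ∈ E, #{e' ∈ E | f e' = f e} = r) :
    #E = r * #(E.image f) := by
  rw [card_eq_sum_card_image f E, sum_const_nat (m := r), mul_comm]
  intro v hv
  obtain ⟨e, he, rfl⟩ := mem_image.mp hv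
  exact hf e he

theorem card_le_card_image_filter_of_card_fiber (hr : 0 < r)
    (hf : ∀ e ∈ E, #{e' ∈ E | f e' = f e} = r) (hg : ∀ e ∈ E, #{e' ∈ E | g e' = g e} = r)
    {s : Finset V} (hs : s ⊆ E.image f) : #s ≤ #({e ∈ E | f e ∈ s}.image g) := by
  have hlower : r * #s ≤ #{e ∈ E | f e ∈ s} := by
    refine mul_card_image_le_card_of_maps_to (fun e he => (mem_filter.mp he).2) r fun v hv => ?_
    obtain ⟨e₀, he₀, rfl⟩ := mem_image.mp (hs hv)
    rw [← hf e₀ he₀, filter_filter]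
    exact card_le_card fun e he => by
      simp only [mem_filter] at he ⊢
      exact ⟨he.1, he.2 ▸ hv, he.2⟩
  have hupper : #{e ∈ E | f e ∈ s} ≤ r * #({e ∈ E | f e ∈ s}.image g) := by
    refine card_le_mul_card_image _ r fun w hw => ?_
    obtain ⟨e₀, he₀, rfl⟩ := mem_image.mp hw
    rw [← hg e₀ (mem_filter.mp he₀).1]
    exact card_le_card (filter_subset_filter _ (filter_subset _ _))
  exact Nat.le_of_mul_le_mul_left (hlower.trans hupper) hr

theorem filter_image_eq_singleton [DecidableEq α] {ι : Type*} [Fintype ι] {ed : ι → α}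
    (hinj : Function.Injective (h ∘ ed)) (w : ι) :
    {e ∈ univ.image ed | h e = h (ed w)} = {ed w} := by
  ext e
  simp only [mem_filter, mem_image, mem_univ, true_and, mem_singleton]
  constructor
  · rintro ⟨⟨u, rfl⟩, hu⟩
    exact congrArg ed (hinj hu)
  · rintro rfl
    exact ⟨⟨w, rfl⟩, rfl⟩

theorem exists_perfect_matching [DecidableEq α] (hr : 0 < r)
    (hf : ∀ e ∈ E, #{e' ∈ E | f e' = f e} = r) (hg : ∀ e ∈ E, #{e' ∈ E | g e' = g e} = r) :
    ∃ M ⊆ E, (∀ e ∈ E, #{e' ∈ M | f e' = f e} = 1) ∧ (∀ e ∈ E, #{e' ∈ M | g e' = g e} = 1) := by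
  obtain ⟨m, hm_inj, hm⟩ := (all_card_le_biUnion_card_iff_exists_injective
      fun v : E.image f => {e ∈ E | f e = v}.image g).mp fun s => by
    refine (card_map _).symm.le.trans <| (card_le_card_image_filter_of_card_fiber hr hf hg
      (s := s.map (Function.Embedding.subtype _)) fun v hv => ?_).trans (card_le_card ?_)
    · obtain ⟨w, -, rfl⟩ := mem_map.mp hv
      exact w.2
    · simp only [subset_iff, mem_image, mem_biUnion, mem_filter, mem_map,
        Function.Embedding.coe_subtype]
      rintro _ ⟨e, ⟨he, w, hw, hwe⟩, rfl⟩
      exact ⟨w, hw, e, ⟨he, hwe.symm⟩, rfl⟩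
  choose ed hed using fun v => mem_image.mp (hm v)
  have hf_ed : Function.Injective (f ∘ ed) := fun v w hvw => Subtype.ext <| by
    simpa [(mem_filter.mp (hed v).1).2, (mem_filter.mp (hed w).1).2] using hvw
  have hg_ed : Function.Injective (g ∘ ed) := fun v w hvw => hm_inj <| by
    simpa [(hed v).2, (hed w).2] using hvw
  have hm_surj : E.image g ⊆ univ.image m := by
    refine (eq_of_subset_of_card_le (fun w hw => ?_) ?_).symm.subset
    · obtain ⟨v, -, rfl⟩ := mem_image.mp hw
      rw [← (hed v).2]
      exact mem_image_of_mem g (mem_filter.mp (hed v).1).1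
    · rw [card_image_of_injective _ hm_inj, card_univ, Fintype.card_coe]
      have := (card_eq_mul_card_image_of_card_fiber hf).symm.trans
        (card_eq_mul_card_image_of_card_fiber hg)
      exact (Nat.eq_of_mul_eq_mul_left hr this).symm.le
  refine ⟨univ.image ed, fun e he => ?_, fun e he => ?_, fun e he => ?_⟩
  · obtain ⟨v, -, rfl⟩ := mem_image.mp he
    exact (mem_filter.mp (hed v).1).1
  · have hv : f (ed ⟨f e, mem_image_of_mem f he⟩) = f e := (mem_filter.mp (hed _).1).2
    rw [← hv, filter_image_eq_singleton hf_ed, card_singleton]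
  · obtain ⟨v, -, hv⟩ := mem_image.mp (hm_surj (mem_image_of_mem g he))
    rw [← hv, ← (hed v).2, filter_image_eq_singleton hg_ed, card_singleton]

theorem card_fiber_sdiff [DecidableEq α] (hME : M ⊆ E)
    (hE : ∀ e ∈ E, #{e' ∈ E | h e' = h e} = r + 1)
    (hM : ∀ e ∈ E, #{e' ∈ M | h e' = h e} = 1) :
    ∀ e ∈ E \ M, #{e' ∈ E \ M | h e' = h e} = r := by
  intro e he
  have he := (mem_sdiff.mp he).1
  have hsplit : {e' ∈ E \ M | h e' = h e} = {e' ∈ E | h e' = h e} \ {e' ∈ M | h e' = h e} := by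
    ext; simp only [mem_filter, mem_sdiff]; tauto
  rw [hsplit, card_sdiff_of_subset (filter_subset_filter _ hME), hE e he, hM e he,
    Nat.add_sub_cancel]

theorem injOn_ite_of_card_fiber_eq_one [DecidableEq α] {β : Type*} {C : Finset β} {c : β}
    (hc : c ∉ C) {χ : α → β} (hME : M ⊆ E) (hM : ∀ e ∈ E, #{e' ∈ M | h e' = h e} = 1)
    (hχ : ∀ e ∈ E \ M, χ e ∈ C) (hinj : Set.InjOn (fun e => (χ e, h e)) ↑(E \ M)) :
    Set.InjOn (fun e => (if e ∈ M then c else χ e, h e)) ↑E := by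
  intro e₁ he₁ e₂ he₂ heq
  obtain ⟨hχeq, hheq⟩ := Prod.mk.inj heq
  by_cases h₁ : e₁ ∈ M <;> by_cases h₂ : e₂ ∈ M <;> simp only [h₁, h₂, if_true, if_false] at hχeq
  · exact card_le_one.mp (hM e₁ (hME h₁)).le e₁ (mem_filter.mpr ⟨h₁, rfl⟩) e₂
      (mem_filter.mpr ⟨h₂, hheq.symm⟩)
  · exact absurd (hχeq ▸ hχ e₂ (mem_sdiff.mpr ⟨he₂, h₂⟩)) hc
  · exact absurd (hχeq ▸ hχ e₁ (mem_sdiff.mpr ⟨he₁, h₁⟩)) hc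
  · exact hinj (mem_sdiff.mpr ⟨he₁, h₁⟩) (mem_sdiff.mpr ⟨he₂, h₂⟩) (Prod.ext hχeq hheq)

/-- König's edge colouring theorem for regular bipartite multigraphs. -/
theorem exists_edge_coloring {β : Type*} [Nonempty β] (C : Finset β) (E : Finset α)
    (hf : ∀ e ∈ E, #{e' ∈ E | f e' = f e} = #C) (hg : ∀ e ∈ E, #{e' ∈ E | g e' = g e} = #C) :
    ∃ χ : α → β, (∀ e ∈ E, χ e ∈ C) ∧ Set.InjOn (fun e => (χ e, f e)) E ∧
      Set.InjOn (fun e => (χ e, g e)) E := by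
  classical
  induction C using Finset.induction_on generalizing E with
  | empty =>
    have hE : E = ∅ := eq_empty_of_forall_notMem fun e he => by
      simpa using (filter_eq_empty_iff.mp (card_eq_zero.mp (hf e he))) he
    exact ⟨fun _ => Classical.arbitrary β, by simp [hE], by simp [hE], by simp [hE]⟩
  | insert c C hc ih =>
    rw [card_insert_of_notMem hc] at hf hg
    obtain ⟨M, hME, hMf, hMg⟩ := exists_perfect_matching C.card.succ_pos hf hg
    obtain ⟨χ, hχC, hχf, hχg⟩ :=
      ih (E \ M) (card_fiber_sdiff hME hf hMf) (card_fiber_sdiff hME hg hMg)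
    refine ⟨fun e => if e ∈ M then c else χ e, fun e he => ?_,
      injOn_ite_of_card_fiber_eq_one hc hME hMf hχC hχf,
      injOn_ite_of_card_fiber_eq_one hc hME hMg hχC hχg⟩
    by_cases heM : e ∈ M
    · simp [heM]
    · simp [heM, hχC e (mem_sdiff.mpr ⟨he, heM⟩)]

end EdgeColoring

open Equiv

def finitarySymmetricGroup (α : Type*) : Subgroup (Perm α) where
  carrier := {σ | {x | σ x ≠ x}.Finite}
  one_mem' := by simp
  mul_mem' {σ ρ} hσ hρ := (hρ.union hσ).subset fun x hx => by
    by_cases hρx : ρ x = x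
    · exact Or.inr (by simpa [hρx] using hx)
    · exact Or.inl hρx
  inv_mem' {σ} hσ := hσ.subset fun x hx h => hx (Perm.inv_eq_iff_eq.mpr h.symm)

theorem Equiv.permCongr_mem_finitarySymmetricGroup {α β : Type*} (e : α ≃ β) {σ : Perm α}
    (hσ : σ ∈ finitarySymmetricGroup α) : e.permCongr σ ∈ finitarySymmetricGroup β :=
  (hσ.image e).subset fun y hy => ⟨e.symm y, fun h => hy (by simp [permCongr_apply, h]), by simp⟩

theorem Finset.card_filter_perm {α : Type*} {σ : Perm α} {s : Finset α}
    (hs : {x | σ x ≠ x} ⊆ s) (P : α → Prop) [DecidablePred P] :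
    #{x ∈ s | P (σ x)} = #{x ∈ s | P x} := by
  conv_rhs => rw [← map_perm hs, filter_map, card_map]
  rfl

theorem exists_perm_eqOn_of_injOn {α : Type*} {s : Set α} (hs : s.Finite) {f : α → α}
    (hmaps : Set.MapsTo f s s) (hinj : Set.InjOn f s) :
    ∃ σ ∈ finitarySymmetricGroup α, Set.EqOn σ f s ∧ ∀ x ∉ s, σ x = x := by
  classical
  let σ := Perm.ofSubtype (((hs.injOn_iff_bijOn_of_mapsTo hmaps).mp hinj).equiv f)
  have hfix : ∀ x ∉ s, σ x = x := fun x hx => Perm.ofSubtype_apply_of_not_mem _ hx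
  refine ⟨σ, hs.subset fun x hx => ?_, fun x hx => ?_, hfix⟩
  · by_contra hxs
    exact hx (hfix x hxs)
  · simp [σ, Perm.ofSubtype_apply_of_mem _ hx, Set.BijOn.equiv]

theorem apply_mul_inv_eq_of_forall_apply_eq {α β : Type*} {p : α → β} {σ ρ : Perm α}
    (h : ∀ x, p (σ x) = p (ρ x)) (x : α) : p ((σ * ρ⁻¹) x) = p x := by
  simpa using h (ρ⁻¹ x)

section Grid

variable {Z Y : Type*}

theorem card_filter_snd_eq_of_mem_product [DecidableEq Y] {s : Finset Z} {t : Finset Y}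
    {p : Z × Y} (hp : p ∈ s ×ˢ t) : #{p' ∈ s ×ˢ t | p'.2 = p.2} = #s := by
  rw [filter_product_right (q := (· = p.2)), filter_eq', if_pos (mem_product.mp hp).2, card_product,
    card_singleton, mul_one]

theorem exists_mul_mul_eq_of_mem_finitarySymmetricGroup {U : Type*} (q : Y → U)
    {π : Perm (Z × Y)} (hπ : π ∈ finitarySymmetricGroup (Z × Y)) (hq : ∀ p, q (π p).2 = q p.2) :
    ∃ c τ d : Perm (Z × Y), c ∈ finitarySymmetricGroup _ ∧ τ ∈ finitarySymmetricGroup _ ∧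
      d ∈ finitarySymmetricGroup _ ∧ (∀ p, (c p).2 = p.2) ∧ (∀ p, (τ p).1 = p.1) ∧
      (∀ p, q (τ p).2 = q p.2) ∧ (∀ p, (d p).2 = p.2) ∧ π = c * τ * d := by
  classical
  rcases isEmpty_or_nonempty Z with hZ | hZ
  · exact ⟨1, π, 1, one_mem _, hπ, one_mem _, fun _ => rfl, fun p => isEmptyElim p.1,
      fun p => isEmptyElim p.1, fun _ => rfl, by simp⟩
  set S := hπ.toFinset
  set G := S.image Prod.fst ×ˢ S.image Prod.snd
  have hSG : {p | π p ≠ p} ⊆ G := fun p hp => mem_product.mpr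
    ⟨mem_image_of_mem _ (hπ.mem_toFinset.mpr hp), mem_image_of_mem _ (hπ.mem_toFinset.mpr hp)⟩
  have hfix : ∀ p ∉ G, π p = p := fun p hp => by_contra fun h => hp (hSG h)
  have hmapsG : ∀ p ∈ G, π p ∈ G := fun p hp => map_perm hSG ▸ mem_map_of_mem _ hp
  have hrow : ∀ p ∈ G, #{p' ∈ G | p'.2 = p.2} = #(S.image Prod.fst) :=
    fun p hp => card_filter_snd_eq_of_mem_product hp
  have hrow' : ∀ p ∈ G, #{p' ∈ G | (π p').2 = (π p).2} = #(S.image Prod.fst) := fun p hp =>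
    (card_filter_perm hSG (·.2 = (π p).2)).trans (hrow _ (hmapsG p hp))
  obtain ⟨χ, hχZ, hχd, hχM⟩ :=
    exists_edge_coloring (f := Prod.snd) (g := Prod.snd ∘ π) (S.image Prod.fst) G hrow hrow'
  obtain ⟨d, hd, hdG, hd_fix⟩ := exists_perm_eqOn_of_injOn G.finite_toSet
    (f := fun p => (χ p, p.2))
    (fun p hp => mem_product.mpr ⟨hχZ p hp, (mem_product.mp hp).2⟩) hχd
  obtain ⟨M, hM, hMG, hM_fix⟩ := exists_perm_eqOn_of_injOn G.finite_toSet
    (f := fun p => (χ p, (π p).2))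
    (fun p hp => mem_product.mpr ⟨hχZ p hp, (mem_product.mp (hmapsG p hp)).2⟩) hχM
  have hMπ : ∀ p, (M p).2 = (π p).2 := fun p => by
    by_cases hp : p ∈ G
    · simp [hMG hp]
    · simp [hM_fix p hp, hfix p hp]
  have hMd : ∀ p, (M p).1 = (d p).1 ∧ q (M p).2 = q (d p).2 := fun p => by
    by_cases hp : p ∈ G
    · simp [hMG hp, hdG hp, hq]
    · simp [hM_fix p hp, hd_fix p hp]
  refine ⟨π * M⁻¹, M * d⁻¹, d, mul_mem hπ (inv_mem hM), mul_mem hM (inv_mem hd), hd,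
    apply_mul_inv_eq_of_forall_apply_eq fun p => (hMπ p).symm,
    apply_mul_inv_eq_of_forall_apply_eq fun p => (hMd p).1,
    apply_mul_inv_eq_of_forall_apply_eq (p := q ∘ Prod.snd) fun p => (hMd p).2, fun p => ?_,
    by group⟩
  by_cases hp : p ∈ G
  · simp [hdG hp]
  · simp [hd_fix p hp]

end Grid

section Coordinates

variable {ι : Type*} {A : ι → Type*}

def fixingCoords (A : ι → Type*) (J : Set ι) : Subgroup (Perm (∀ j, A j)) where
  carrier := {σ | ∀ x, ∀ j ∈ J, σ x j = x j}
  one_mem' _ _ _ := rfl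
  mul_mem' {σ ρ} hσ hρ x j hj := (hσ (ρ x) j hj).trans (hρ x j hj)
  inv_mem' {σ} hσ x j hj := by simpa using (hσ (σ⁻¹ x) j hj).symm

theorem exists_mul_mul_eq_of_mem_fixingCoords [DecidableEq ι] (i : ι) {J : Set ι}
    {π : Perm (∀ j, A j)} (hπ : π ∈ finitarySymmetricGroup _) (hπJ : π ∈ fixingCoords A J) :
    ∃ c τ d, c ∈ finitarySymmetricGroup _ ⊓ fixingCoords A {i}ᶜ ∧
      τ ∈ finitarySymmetricGroup _ ⊓ fixingCoords A (insert i J) ∧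
      d ∈ finitarySymmetricGroup _ ⊓ fixingCoords A {i}ᶜ ∧ π = c * τ * d := by
  set e := piSplitAt i A
  have hpull : ∀ σ x j (hj : j ≠ i), e.symm.permCongr σ x j = (σ (e x)).2 ⟨j, hj⟩ := by
    intro σ x j hj
    simp [e, permCongr_apply, hj]
  obtain ⟨c, τ, d, hc, hτ, hd, hc₂, hτ₁, hτ₂, hd₂, hπ_eq⟩ :=
    exists_mul_mul_eq_of_mem_finitarySymmetricGroup
      (fun y (j : {j : {j // j ≠ i} // ↑j ∈ J}) => y j)
      (e.permCongr_mem_finitarySymmetricGroup hπ) fun p => funext fun ⟨⟨j, hji⟩, hjJ⟩ => by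
        simpa [e, permCongr_apply, hji] using hπJ (e.symm p) j hjJ
  have hcoord : ∀ σ : Perm (A i × ∀ j : {j // j ≠ i}, A j), (∀ p, (σ p).2 = p.2) →
      e.symm.permCongr σ ∈ fixingCoords A {i}ᶜ := fun σ hσ x j hj => by
    rw [hpull σ x j hj, hσ]; simp [e]
  refine ⟨e.symm.permCongr c, e.symm.permCongr τ, e.symm.permCongr d,
    ⟨e.symm.permCongr_mem_finitarySymmetricGroup hc, hcoord c hc₂⟩,
    ⟨e.symm.permCongr_mem_finitarySymmetricGroup hτ, fun x j hj => ?_⟩,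
    ⟨e.symm.permCongr_mem_finitarySymmetricGroup hd, hcoord d hd₂⟩, ?_⟩
  · rcases eq_or_ne j i with rfl | hji
    · simpa [e, permCongr_apply] using hτ₁ (e x)
    · rw [hpull τ x j hji]
      simpa [e] using congrFun (hτ₂ (e x)) ⟨⟨j, hji⟩, hj.resolve_left hji⟩
  · rw [← permCongr_mul, ← permCongr_mul, ← hπ_eq]
    ext x
    simp [permCongr_apply]

end Coordinates

section NestedProd

variable {G : Type*} [Monoid G] (a b : ℕ → G)

/-- `a (m-1) * ⋯ * a 1 * a 0 * b 1 * ⋯ * b (m-1)` -/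
def nestedProd (m : ℕ) : G :=
  (((List.range m).map a).reverse ++ ((List.range m).map b).drop 1).prod

theorem nestedProd_one : nestedProd a b 1 = a 0 := by
  simp [nestedProd]

theorem nestedProd_succ {m : ℕ} (hm : 1 ≤ m) :
    nestedProd a b (m + 1) = a m * nestedProd a b m * b m := by
  simp only [nestedProd, List.range_succ, List.map_append, List.map_singleton,
    List.reverse_append, List.reverse_singleton]
  rw [List.drop_append_of_le_length (by simpa using hm)]
  simp [List.prod_append, mul_assoc]

theorem nestedProd_congr {a' b' : ℕ → G} {m : ℕ} (ha : ∀ i < m, a i = a' i)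
    (hb : ∀ i < m, b i = b' i) : nestedProd a b m = nestedProd a' b' m := by
  simp only [nestedProd]
  rw [List.map_congr_left fun i hi => ha i (List.mem_range.mp hi),
    List.map_congr_left fun i hi => hb i (List.mem_range.mp hi)]

end NestedProd

theorem exists_nestedProd_eq {k : ℕ} {A : Fin k → Type*} {m : ℕ} (hm : 1 ≤ m) (hmk : m ≤ k)
    {π : Perm (∀ j, A j)} (hπ : π ∈ finitarySymmetricGroup _)
    (hπm : π ∈ fixingCoords A {j | m ≤ (j : ℕ)}) :
    ∃ a b : ℕ → Perm (∀ j, A j), (∀ i (hi : i < k),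
      a i ∈ finitarySymmetricGroup _ ⊓ fixingCoords A {⟨i, hi⟩}ᶜ ∧
      b i ∈ finitarySymmetricGroup _ ⊓ fixingCoords A {⟨i, hi⟩}ᶜ) ∧ π = nestedProd a b m := by
  induction m, hm using Nat.le_induction generalizing π with
  | base =>
    refine ⟨Function.update 1 0 π, 1, fun i hi => ⟨?_, one_mem _⟩, by simp [nestedProd_one]⟩
    rcases eq_or_ne i 0 with rfl | hi0
    · simp only [Function.update_self]
      exact ⟨hπ, fun x j hj => hπm x j (Nat.one_le_iff_ne_zero.mpr fun h => hj (Fin.ext h))⟩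
    · simp [hi0]
  | succ m hm ih =>
    obtain ⟨c, τ, d, hc, hτ, hd, rfl⟩ := exists_mul_mul_eq_of_mem_fixingCoords ⟨m, hmk⟩ hπ hπm
    obtain ⟨a, b, hab, rfl⟩ := ih (by omega) hτ.1 fun x j hj => hτ.2 x j <| by
      rcases (Nat.le_iff_lt_or_eq.mp hj) with hlt | heq
      · exact Or.inr hlt
      · exact Or.inl (Fin.ext heq.symm)
    refine ⟨Function.update a m c, Function.update b m d, fun i hi => ?_, ?_⟩
    · rcases eq_or_ne i m with rfl | him
      · simpa using ⟨hc, hd⟩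
      · simpa [him] using hab i hi
    · rw [nestedProd_succ _ _ hm, nestedProd_congr (Function.update a m c) (Function.update b m d)
        (a' := a) (b' := b) (fun i hi => by simp [hi.ne]) (fun i hi => by simp [hi.ne])]
      simp

/-- For a product `X = A₁ × ⋯ × A_k` of arbitrary sets, every finite-support
permutation of `X` can be written as `a_k ∘ ⋯ ∘ a_2 ∘ a_1 ∘ b_2 ∘ ⋯ ∘ b_k` where
`a_i, b_i` are finite-support permutations modifying only the `i`-th coordinate.
(Here `(List.ofFn a).reverse.prod = a_k * ⋯ * a_1` and
`((List.ofFn b).drop 1).prod = b_2 * ⋯ * b_k`, with `*` denoting composition.) -/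
theorem finite_support_product_alternation (k : ℕ) (hk : 1 ≤ k) (A : Fin k → Type*)
    (π : Equiv.Perm (∀ i, A i)) (hπ : {x | π x ≠ x}.Finite) :
    ∃ a b : Fin k → Equiv.Perm (∀ i, A i),
      (∀ i, {x | a i x ≠ x}.Finite) ∧
      (∀ i, {x | b i x ≠ x}.Finite) ∧
      (∀ i, ∀ x, ∀ j, j ≠ i → a i x j = x j) ∧
      (∀ i, ∀ x, ∀ j, j ≠ i → b i x j = x j) ∧
      π = ((List.ofFn a).reverse ++ (List.ofFn b).drop 1).prod := by
  obtain ⟨a, b, hab, rfl⟩ :=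
    exists_nestedProd_eq hk le_rfl hπ fun x j hj => absurd j.isLt hj.not_gt
  have hofFn : ∀ c : ℕ → Perm (∀ i, A i),
      List.ofFn (fun i : Fin k => c i) = (List.range k).map c :=
    fun c => List.ext_getElem (by simp) (by simp)
  refine ⟨fun i => a i, fun i => b i, fun i => (hab i i.isLt).1.1, fun i => (hab i i.isLt).2.1,
    fun i x j hj => (hab i i.isLt).1.2 x j hj, fun i x j hj => (hab i i.isLt).2.2 x j hj, ?_⟩
  rw [hofFn, hofFn]
  rfl
end

section
/- Let A and B be countable sets (finite or countably infinite). Then Sym(A × B) = G_L·G_R·G_L·G_R ∪ G_R·G_L·G_R·G_L; that is, every permutation π of A × B can be written either as π = l₁ ∘ r₁ ∘ l₂ ∘ r₂ with l₁, l₂ ∈ G_L and r₁, r₂ ∈ G_R, or as π = r₁ ∘ l₁ ∘ r₂ ∘ l₂ with r₁, r₂ ∈ G_R and l₁, l₂ ∈ G_L. -/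
/-!
Call `φ : A × B ≃ A × B` admissible for `π` if `p ↦ (p.1, (φ p).2)` and
`p ↦ ((φ p).1, (π p).2)` are bijections as well. Then each step of the zigzag
`p ↦ (p.1, (φ p).2) ↦ φ p ↦ ((φ p).1, (π p).2) ↦ π p` is a bijection of `A × B` fixing one
coordinate, so `π ∈ G_L G_R G_L G_R`.

For finite `A`, `B` take `φ p = (c p, p.2)`, where `c` is a proper `|A|`-edge-colouring of the
`|A|`-regular bipartite multigraph on `B ⊔ B` with an edge `p.2 — (π p).2` for each `p`
(König's theorem, by repeatedly removing a perfect matching supplied by Hall's theorem).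

For infinite `A`, build the graph of an admissible `φ` by a back-and-forth construction, adding
one point at a time while keeping all four maps of the zigzag injective. A fresh column of `A`
meets almost every constraint. The step that makes `φ` surjective also needs `π` to be
row-spreading: outside finitely many columns, infinitely many points are sent outside any given
finite proper set of rows. If `A` is infinite and `B` finite, `π` is row-spreading. If both are
infinite, `π` or its transpose `B × A ≃ B × A` is row-spreading. Transposing swaps `G_L` and
`G_R`.
-/

open Function Equiv

section Factorization

variable {A B : Type*}

def IsLeftPerm (σ : Perm (A × B)) : Prop := ∀ p, (σ p).2 = p.2

def IsRightPerm (σ : Perm (A × B)) : Prop := ∀ p, (σ p).1 = p.1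

def IsLRLR (π : Perm (A × B)) : Prop :=
  ∃ l₁ r₁ l₂ r₂ : Perm (A × B), IsLeftPerm l₁ ∧ IsRightPerm r₁ ∧ IsLeftPerm l₂ ∧
    IsRightPerm r₂ ∧ ∀ p, π p = l₁ (r₁ (l₂ (r₂ p)))

def IsRLRL (π : Perm (A × B)) : Prop :=
  ∃ r₁ l₁ r₂ l₂ : Perm (A × B), IsRightPerm r₁ ∧ IsLeftPerm l₁ ∧ IsRightPerm r₂ ∧
    IsLeftPerm l₂ ∧ ∀ p, π p = r₁ (l₁ (r₂ (l₂ p)))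

theorem isLeftPerm_symm_trans {U : Type*} {f g : U ≃ A × B} (h : ∀ u, (g u).2 = (f u).2) :
    IsLeftPerm (f.symm.trans g) := fun p => by
  simpa using h (f.symm p)

theorem isRightPerm_symm_trans {U : Type*} {f g : U ≃ A × B} (h : ∀ u, (g u).1 = (f u).1) :
    IsRightPerm (f.symm.trans g) := fun p => by
  simpa using h (f.symm p)

theorem isLRLR_of_bijective (π : Perm (A × B)) {U : Type*} {f₀ f₁ f₂ f₃ : U → A × B}
    (h₀ : Bijective f₀) (h₁ : Bijective f₁) (h₂ : Bijective f₂) (h₃ : Bijective f₃)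
    (h₀₁ : ∀ u, (f₁ u).1 = (f₀ u).1) (h₁₂ : ∀ u, (f₂ u).2 = (f₁ u).2)
    (h₂₃ : ∀ u, (f₃ u).1 = (f₂ u).1) (h₃π : ∀ u, (π (f₀ u)).2 = (f₃ u).2) : IsLRLR π := by
  let e₀ := Equiv.ofBijective f₀ h₀
  let e₁ := Equiv.ofBijective f₁ h₁
  let e₂ := Equiv.ofBijective f₂ h₂
  let e₃ := Equiv.ofBijective f₃ h₃
  refine ⟨e₃.symm.trans (e₀.trans π), e₂.symm.trans e₃, e₁.symm.trans e₂, e₀.symm.trans e₁,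
    isLeftPerm_symm_trans h₃π, isRightPerm_symm_trans h₂₃, isLeftPerm_symm_trans h₁₂,
    isRightPerm_symm_trans h₀₁, fun p => ?_⟩
  simp

theorem isRLRL_of_isLRLR_permCongr {π : Perm (A × B)}
    (h : IsLRLR ((prodComm A B).permCongr π)) : IsRLRL π := by
  obtain ⟨l₁, r₁, l₂, r₂, hl₁, hr₁, hl₂, hr₂, hπ⟩ := h
  let c : Perm (B × A) → Perm (A × B) := (prodComm B A).permCongr
  refine ⟨c l₁, c r₁, c l₂, c r₂, fun p => ?_, fun p => ?_, fun p => ?_, fun p => ?_, fun p => ?_⟩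
  · simpa [c] using hl₁ p.swap
  · simpa [c] using hr₁ p.swap
  · simpa [c] using hl₂ p.swap
  · simpa [c] using hr₂ p.swap
  · simpa [c, Prod.swap_eq_iff_eq_swap] using hπ p.swap

end Factorization

section Konig

open Finset

variable {A B P : Type*}

theorem card_le_card_biUnion_image_fiber [DecidableEq B] (s t : P → B) {S : Finset P} {k : ℕ}
    (hk : 0 < k) (hs : ∀ b, #{p ∈ S | s p = b} = k) (ht : ∀ b, #{p ∈ S | t p = b} = k)
    (X : Finset B) : #X ≤ #(X.biUnion fun b => {p ∈ S | s p = b}.image t) := by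
  set Y := X.biUnion fun b => {p ∈ S | s p = b}.image t
  have hXY : {p ∈ S | s p ∈ X} ⊆ {p ∈ S | t p ∈ Y} := by
    intro p hp
    rw [mem_filter] at hp ⊢
    exact ⟨hp.1, mem_biUnion.2 ⟨s p, hp.2, mem_image_of_mem t (mem_filter.2 ⟨hp.1, rfl⟩)⟩⟩
  have hcard := card_le_card hXY
  rw [← sum_card_fiberwise_eq_card_filter, ← sum_card_fiberwise_eq_card_filter,
    sum_const_nat fun b _ => hs b, sum_const_nat fun b _ => ht b] at hcard
  exact Nat.le_of_mul_le_mul_right hcard hk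

theorem card_filter_image_eq_one [Fintype B] [DecidableEq B] [DecidableEq P] {M : B → P}
    {u : P → B} (hu : Bijective (u ∘ M)) (b : B) : #{p ∈ univ.image M | u p = b} = 1 := by
  obtain ⟨a, ha, huniq⟩ := hu.existsUnique b
  refine card_eq_one.2 ⟨M a, ext fun p => ?_⟩
  simp only [mem_filter, mem_image, mem_univ, true_and, mem_singleton]
  constructor
  · rintro ⟨⟨a', rfl⟩, h⟩
    rw [huniq a' h]
  · rintro rfl
    exact ⟨⟨a, rfl⟩, ha⟩

theorem exists_perfect_matching_s10 [Fintype B] [DecidableEq B] (s t : P → B) {S : Finset P}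
    {k : ℕ} (hs : ∀ b, #{p ∈ S | s p = b} = k + 1) (ht : ∀ b, #{p ∈ S | t p = b} = k + 1) :
    ∃ T ⊆ S, (∀ b, #{p ∈ T | s p = b} = 1) ∧ ∀ b, #{p ∈ T | t p = b} = 1 := by
  classical
  obtain ⟨f, hf, hfM⟩ := (all_card_le_biUnion_card_iff_exists_injective _).1
    (card_le_card_biUnion_image_fiber s t k.succ_pos hs ht)
  choose M hM hMt using fun b => mem_image.1 (hfM b)
  simp only [mem_filter] at hM
  have hsM : s ∘ M = id := funext fun b => (hM b).2
  have htM : t ∘ M = f := funext hMt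
  refine ⟨univ.image M, fun p hp => ?_, card_filter_image_eq_one (hsM ▸ bijective_id),
    card_filter_image_eq_one (htM ▸ Finite.injective_iff_bijective.1 hf)⟩
  obtain ⟨b, -, rfl⟩ := mem_image.1 hp
  exact (hM b).1

theorem card_filter_sdiff_eq [DecidableEq B] [DecidableEq P] {S T : Finset P} (hTS : T ⊆ S)
    {s : P → B} {k : ℕ} (hS : ∀ b, #{p ∈ S | s p = b} = k + 1)
    (hT : ∀ b, #{p ∈ T | s p = b} = 1) (b : B) : #{p ∈ S \ T | s p = b} = k := by
  have hfilter : {p ∈ S \ T | s p = b} = {p ∈ S | s p = b} \ {p ∈ T | s p = b} := by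
    ext
    simp only [mem_filter, mem_sdiff]
    tauto
  rw [hfilter, card_sdiff_of_subset (filter_subset_filter _ hTS), hS, hT, Nat.add_sub_cancel]

theorem injOn_ite_mem_s10 [DecidableEq B] [DecidableEq P] {S T : Finset P} {s : P → B}
    {c : P → ℕ} {k : ℕ} (hT : ∀ b, #{p ∈ T | s p = b} = 1) (hc : ∀ p ∈ S \ T, c p < k)
    (hcs : Set.InjOn (fun p => (c p, s p)) ↑(S \ T)) :
    Set.InjOn (fun p => (if p ∈ T then k else c p, s p)) S := by
  intro p hp q hq hpq
  obtain ⟨hcpq, hspq⟩ := Prod.mk.inj hpq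
  have hp' : p ∉ T → p ∈ S \ T := fun h => mem_sdiff.2 ⟨hp, h⟩
  have hq' : q ∉ T → q ∈ S \ T := fun h => mem_sdiff.2 ⟨hq, h⟩
  by_cases hpT : p ∈ T <;> by_cases hqT : q ∈ T <;>
    simp only [hpT, hqT, if_true, if_false] at hcpq
  · exact card_le_one.1 (hT (s p)).le p (mem_filter.2 ⟨hpT, rfl⟩) q
      (mem_filter.2 ⟨hqT, hspq.symm⟩)
  · exact absurd hcpq (hc q (hq' hqT)).ne'
  · exact absurd hcpq (hc p (hp' hpT)).ne
  · exact hcs (hp' hpT) (hq' hqT) (Prod.ext hcpq hspq)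

/-- König's edge-colouring theorem for the `k`-regular bipartite multigraph with an edge
`s p — t p` for each `p ∈ S`. -/
theorem exists_coloring_of_card_fiber [Fintype B] [DecidableEq B] (s t : P → B) (k : ℕ)
    (S : Finset P) (hs : ∀ b, #{p ∈ S | s p = b} = k) (ht : ∀ b, #{p ∈ S | t p = b} = k) :
    ∃ c : P → ℕ, (∀ p ∈ S, c p < k) ∧ Set.InjOn (fun p => (c p, s p)) S ∧
      Set.InjOn (fun p => (c p, t p)) S := by
  classical
  induction k generalizing S with
  | zero =>
    have hS : S = ∅ := eq_empty_of_forall_notMem fun p hp =>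
      (card_pos.2 ⟨p, mem_filter.2 ⟨hp, rfl⟩⟩ : 0 < #{q ∈ S | s q = s p}).ne' (hs (s p))
    subst hS
    exact ⟨0, by simp, by simp, by simp⟩
  | succ k ih =>
    obtain ⟨T, hTS, hTs, hTt⟩ := exists_perfect_matching_s10 s t hs ht
    obtain ⟨c, hc, hcs, hct⟩ :=
      ih (S \ T) (card_filter_sdiff_eq hTS hs hTs) (card_filter_sdiff_eq hTS ht hTt)
    refine ⟨fun p => if p ∈ T then k else c p, fun p hp => ?_, injOn_ite_mem_s10 hTs hc hcs,
      injOn_ite_mem_s10 hTt hc hct⟩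
    dsimp only
    split_ifs with hpT
    · exact k.lt_succ_self
    · exact (hc p (mem_sdiff.2 ⟨hp, hpT⟩)).trans k.lt_succ_self

theorem card_filter_snd_apply_eq [Fintype A] [Fintype B] [DecidableEq B] (π : Perm (A × B))
    (b : B) : #{p | (π p).2 = b} = Fintype.card A := by
  rw [card_equiv π (t := {p | p.2 = b}) (by simp), ← univ_product_univ,
    filter_product_right (fun b' => b' = b), card_product, filter_eq', if_pos (mem_univ b),
    card_singleton, mul_one, card_univ]

theorem isLRLR_of_finite [Finite A] [Finite B] (π : Perm (A × B)) : IsLRLR π := by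
  classical
  have := Fintype.ofFinite A
  have := Fintype.ofFinite B
  obtain ⟨c, hc, hcs, hct⟩ := exists_coloring_of_card_fiber Prod.snd (fun p => (π p).2)
    (Fintype.card A) univ (card_filter_snd_apply_eq 1) (card_filter_snd_apply_eq π)
  let α : A × B → A := fun p => (Fintype.equivFin A).symm ⟨c p, hc p (mem_univ p)⟩
  have hα : ∀ {p q}, α p = α q → c p = c q := fun h => by
    simpa [α] using h
  refine isLRLR_of_bijective π (f₀ := id) (f₁ := id) (f₂ := fun p => (α p, p.2))
    (f₃ := fun p => (α p, (π p).2)) bijective_id bijective_id ?_ ?_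
    (fun _ => rfl) (fun _ => rfl) (fun _ => rfl) (fun _ => rfl)
  · exact Finite.injective_iff_bijective.1 fun p q h =>
      hcs (mem_univ p) (mem_univ q) (Prod.ext (hα (Prod.mk.inj h).1) (Prod.mk.inj h).2)
  · exact Finite.injective_iff_bijective.1 fun p q h =>
      hct (mem_univ p) (mem_univ q) (Prod.ext (hα (Prod.mk.inj h).1) (Prod.mk.inj h).2)

end Konig

section BackAndForth

open Set

variable {A B : Type*}

theorem exists_bijective_domRestrict_of_forall_extend {ι X Y : Type*} [Countable ι]
    [Countable Y] (k : ι → X → Y)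
    (hext : ∀ S : Set X, S.Finite → (∀ i, InjOn (k i) S) → ∀ i, ∀ y ∉ k i '' S,
      ∃ x, k i x = y ∧ ∀ j, k j x ∉ k j '' S) :
    ∃ U : Set X, ∀ i, Bijective (U.domRestrict (k i)) := by
  rcases isEmpty_or_nonempty (ι × Y) with hempty | _
  · exact ⟨∅, fun i => ⟨fun x => x.2.elim, fun y => (hempty.false (i, y)).elim⟩⟩
  let Good := {S : Set X // S.Finite ∧ ∀ i, InjOn (k i) S}
  have hstep : ∀ (S : Good) (d : ι × Y), ∃ S' : Good, S.1 ⊆ S'.1 ∧ d.2 ∈ k d.1 '' S'.1 := by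
    rintro ⟨S, hfin, hinj⟩ ⟨i, y⟩
    by_cases hy : y ∈ k i '' S
    · exact ⟨⟨S, hfin, hinj⟩, subset_rfl, hy⟩
    obtain ⟨x, rfl, hx⟩ := hext S hfin hinj i y hy
    have hxS : x ∉ S := fun h => hy ⟨x, h, rfl⟩
    exact ⟨⟨insert x S, hfin.insert x, fun j => (injOn_insert hxS).2 ⟨hinj j, hx j⟩⟩,
      subset_insert x S, x, mem_insert x S, rfl⟩
  choose next hsub hmem using hstep
  obtain ⟨d, hd⟩ := exists_surjective_nat (ι × Y)
  let S : ℕ → Good := fun n => Nat.rec ⟨∅, finite_empty, fun _ => injOn_empty _⟩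
    (fun n S => next S (d n)) n
  have hmono : Monotone fun n => (S n).1 := monotone_nat_of_le_succ fun n => hsub _ _
  refine ⟨⋃ n, (S n).1, fun i => ⟨?_, fun y => ?_⟩⟩
  · exact (inj_on_iUnion_of_directed hmono.directed_le fun n => (S n).2.2 i).injective
  · obtain ⟨n, hn⟩ := hd (i, y)
    obtain ⟨x, hx, hkx⟩ := hmem (S n) (d n)
    rw [hn] at hkx
    exact ⟨⟨x, mem_iUnion.2 ⟨n + 1, hx⟩⟩, hkx⟩

theorem exists_mk_notMem_image_of_fst_eq {X : Type*} {S : Set X} (hS : S.Finite)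
    {f g : X → A × B} (hf : InjOn f S) (hg : InjOn g S) (hfg : ∀ x ∈ S, (f x).1 = (g x).1)
    {a : A} (h : ∃ b, (a, b) ∉ f '' S) : ∃ b, (a, b) ∉ g '' S := by
  contrapose! h
  intro b
  let T := {x ∈ S | (g x).1 = a}
  have hcol : Prod.fst ⁻¹' {a} ⊆ g '' T := by
    rintro ⟨a', b'⟩ rfl
    obtain ⟨x, hx, hgx⟩ := h b'
    exact ⟨x, ⟨hx, by rw [hgx]⟩, hgx⟩
  have hfT : f '' T ⊆ Prod.fst ⁻¹' {a} := by
    rintro _ ⟨x, ⟨hx, hxa⟩, rfl⟩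
    exact (hfg x hx).trans hxa
  have hT : T.Finite := hS.subset fun x hx => hx.1
  have hfin : (Prod.fst ⁻¹' {a} : Set (A × B)).Finite := (hT.image g).subset hcol
  have heq : f '' T = Prod.fst ⁻¹' {a} := by
    refine eq_of_subset_of_ncard_le hfT ?_ hfin
    calc (Prod.fst ⁻¹' {a}).ncard ≤ (g '' T).ncard := ncard_le_ncard hcol (hT.image g)
      _ = (f '' T).ncard := by
        rw [(hg.mono fun x hx => hx.1).ncard_image, (hf.mono fun x hx => hx.1).ncard_image]
  obtain ⟨x, hx, hfx⟩ := heq.symm.subset (show (a, b) ∈ Prod.fst ⁻¹' {a} from rfl)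
  exact ⟨x, hx.1, hfx⟩

theorem infinite_setOf_snd_apply_eq [Infinite A] (π : Perm (A × B)) (b : B) :
    {p | (π p).2 = b}.Infinite :=
  infinite_of_injective_forall_mem (f := fun a => π.symm (a, b))
    (π.symm.injective.comp (Prod.mk_left_injective b)) (by simp)

def RowSpreading (π : Perm (A × B)) : Prop :=
  ∀ C : Set A, C.Finite → ∀ R : Set B, R.Finite → R ≠ univ →
    {p | p.1 ∉ C ∧ (π p).2 ∉ R}.Infinite

theorem rowSpreading_of_finite [Infinite A] [Finite B] (π : Perm (A × B)) : RowSpreading π := by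
  intro C hC R _ hR
  obtain ⟨b, hb⟩ := (ne_univ_iff_exists_notMem _).1 hR
  refine ((infinite_setOf_snd_apply_eq π b).sdiff (hC.prod finite_univ)).mono ?_
  rintro p ⟨hpb, hpC⟩
  exact ⟨fun h => hpC ⟨h, trivial⟩, hpb ▸ hb⟩

/- If both fail, with witnesses `C, R` and `C', R'`, then for a column `a ∉ C` the injection
`b ↦ π (a, b)` sends all but finitely many `b` into the finite set `R' ×ˢ R`. -/
theorem rowSpreading_or_rowSpreading_permCongr [Infinite A] [Infinite B] (π : Perm (A × B)) :
    RowSpreading π ∨ RowSpreading ((prodComm A B).permCongr π) := by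
  by_contra! h
  simp only [RowSpreading, not_forall, not_infinite] at h
  obtain ⟨⟨C, hC, R, hR, -, hK⟩, ⟨C', hC', R', hR', -, hK'⟩⟩ := h
  obtain ⟨a, ha⟩ := hC.exists_notMem
  have hcol := (hR'.prod hR).preimage (f := fun b => π (a, b))
    (π.injective.comp (Prod.mk_right_injective a)).injOn
  have hK₁ := hK.preimage (f := Prod.mk a) (Prod.mk_right_injective a).injOn
  have hK₂ := hK'.preimage (f := (·, a)) (Prod.mk_left_injective a).injOn
  refine infinite_univ (α := B) ((hcol.union (hK₁.union (hK₂.union hC'))).subset fun b _ => ?_)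
  simp only [mem_union, mem_preimage, mem_prod, mem_ofPred_eq, permCongr_apply, prodComm_symm,
    prodComm_apply, Prod.swap_prod_mk, Prod.snd_swap]
  tauto

/-- On a point `(p, φ p)` of the graph of `φ`, the four maps take the values
`p`, `(p.1, (φ p).2)`, `φ p`, `((φ p).1, (π p).2)` of the zigzag. -/
def zigzag (π : Perm (A × B)) : Fin 4 → (A × B) × (A × B) → A × B
  | 0 => fun e => e.1
  | 1 => fun e => (e.1.1, e.2.2)
  | 2 => fun e => e.2
  | 3 => fun e => (e.2.1, (π e.1).2)

variable {π : Perm (A × B)} {S : Set ((A × B) × (A × B))}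

theorem forall_zigzag_notMem {p q : A × B} (h₀ : p ∉ zigzag π 0 '' S)
    (h₁ : (p.1, q.2) ∉ zigzag π 1 '' S) (h₂ : q ∉ zigzag π 2 '' S)
    (h₃ : (q.1, (π p).2) ∉ zigzag π 3 '' S) : ∀ j, zigzag π j (p, q) ∉ zigzag π j '' S := by
  intro j
  fin_cases j <;> assumption

theorem exists_forall_mk_notMem_zigzag [Infinite A] (π : Perm (A × B)) (hS : S.Finite) :
    ∃ x : A, ∀ b, (x, b) ∉ zigzag π 2 '' S ∧ (x, b) ∉ zigzag π 3 '' S := by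
  obtain ⟨x, hx⟩ := (hS.image fun e => e.2.1).exists_notMem
  exact ⟨x, fun b => ⟨fun ⟨e, he, h⟩ => hx ⟨e, he, congrArg Prod.fst h⟩,
    fun ⟨e, he, h⟩ => hx ⟨e, he, congrArg Prod.fst h⟩⟩⟩

theorem zigzag_extend_zero [Infinite A] (hS : S.Finite) (hinj : ∀ i, InjOn (zigzag π i) S)
    {c : A × B} (hc : c ∉ zigzag π 0 '' S) :
    ∃ e, zigzag π 0 e = c ∧ ∀ j, zigzag π j e ∉ zigzag π j '' S := by
  obtain ⟨y, hy⟩ :=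
    exists_mk_notMem_image_of_fst_eq hS (hinj 0) (hinj 1) (fun _ _ => rfl) ⟨c.2, hc⟩
  obtain ⟨x, hx⟩ := exists_forall_mk_notMem_zigzag π hS
  exact ⟨(c, (x, y)), rfl, forall_zigzag_notMem hc hy (hx y).1 (hx _).2⟩

theorem zigzag_extend_one [Infinite A] (hS : S.Finite) (hinj : ∀ i, InjOn (zigzag π i) S)
    {c : A × B} (hc : c ∉ zigzag π 1 '' S) :
    ∃ e, zigzag π 1 e = c ∧ ∀ j, zigzag π j e ∉ zigzag π j '' S := by
  obtain ⟨b, hb⟩ :=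
    exists_mk_notMem_image_of_fst_eq hS (hinj 1) (hinj 0) (fun _ _ => rfl) ⟨c.2, hc⟩
  obtain ⟨x, hx⟩ := exists_forall_mk_notMem_zigzag π hS
  exact ⟨((c.1, b), (x, c.2)), rfl, forall_zigzag_notMem hb hc (hx _).1 (hx _).2⟩

theorem zigzag_extend_two (hS : S.Finite) (hinj : ∀ i, InjOn (zigzag π i) S)
    (hπ : RowSpreading π) {c : A × B} (hc : c ∉ zigzag π 2 '' S) :
    ∃ e, zigzag π 2 e = c ∧ ∀ j, zigzag π j e ∉ zigzag π j '' S := by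
  obtain ⟨b, hb⟩ :=
    exists_mk_notMem_image_of_fst_eq hS (hinj 2) (hinj 3) (fun _ _ => rfl) ⟨c.2, hc⟩
  have hC : ((·, c.2) ⁻¹' (zigzag π 1 '' S)).Finite :=
    (hS.image _).preimage (Prod.mk_left_injective c.2).injOn
  have hR : ((c.1, ·) ⁻¹' (zigzag π 3 '' S)).Finite :=
    (hS.image _).preimage (Prod.mk_right_injective c.1).injOn
  obtain ⟨p, ⟨hp₁, hp₃⟩, hp₀⟩ := ((hπ _ hC _ hR ((ne_univ_iff_exists_notMem _).2 ⟨b, hb⟩)).sdiff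
    (hS.image (zigzag π 0))).nonempty
  exact ⟨(p, c), rfl, forall_zigzag_notMem hp₀ hp₁ hc hp₃⟩

theorem zigzag_extend_three [Infinite A] (hS : S.Finite) (hinj : ∀ i, InjOn (zigzag π i) S)
    {c : A × B} (hc : c ∉ zigzag π 3 '' S) :
    ∃ e, zigzag π 3 e = c ∧ ∀ j, zigzag π j e ∉ zigzag π j '' S := by
  rcases finite_or_infinite B with hB | hB
  · -- `p` lies in a column untouched by `S`, so only `(c.1, y) ∉ zigzag π 2 '' S` constrains `y`
    obtain ⟨y, hy⟩ :=
      exists_mk_notMem_image_of_fst_eq hS (hinj 3) (hinj 2) (fun _ _ => rfl) ⟨c.2, hc⟩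
    obtain ⟨p, hpb, hpS⟩ := ((infinite_setOf_snd_apply_eq π c.2).sdiff
      ((hS.image fun e => e.1.1).prod (finite_univ (α := B)))).nonempty
    replace hpb : (π p).2 = c.2 := hpb
    have hp : ∀ b, (p.1, b) ∉ zigzag π 0 '' S ∧ (p.1, b) ∉ zigzag π 1 '' S := fun b =>
      ⟨fun ⟨e, he, h⟩ => hpS (mk_mem_prod ⟨e, he, (congrArg Prod.fst h :)⟩ trivial),
        fun ⟨e, he, h⟩ => hpS (mk_mem_prod ⟨e, he, (congrArg Prod.fst h :)⟩ trivial)⟩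
    exact ⟨(p, (c.1, y)), Prod.ext rfl hpb,
      forall_zigzag_notMem (hp p.2).1 (hp y).2 hy (by rwa [hpb])⟩
  · obtain ⟨p, hpb, hp₀⟩ := ((infinite_setOf_snd_apply_eq π c.2).sdiff
      (hS.image (zigzag π 0))).nonempty
    replace hpb : (π p).2 = c.2 := hpb
    obtain ⟨y, hy⟩ := (hS.image fun e => e.2.2).exists_notMem
    exact ⟨(p, (c.1, y)), Prod.ext rfl hpb, forall_zigzag_notMem hp₀
      (fun ⟨e, he, h⟩ => hy ⟨e, he, congrArg Prod.snd h⟩)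
      (fun ⟨e, he, h⟩ => hy ⟨e, he, congrArg Prod.snd h⟩) (by rwa [hpb])⟩

theorem zigzag_extend [Infinite A] (hπ : RowSpreading π) (hS : S.Finite)
    (hinj : ∀ i, InjOn (zigzag π i) S) (i : Fin 4) {c : A × B} (hc : c ∉ zigzag π i '' S) :
    ∃ e, zigzag π i e = c ∧ ∀ j, zigzag π j e ∉ zigzag π j '' S := by
  fin_cases i
  · exact zigzag_extend_zero hS hinj hc
  · exact zigzag_extend_one hS hinj hc
  · exact zigzag_extend_two hS hinj hπ hc
  · exact zigzag_extend_three hS hinj hc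

theorem isLRLR_of_rowSpreading [Countable A] [Countable B] [Infinite A] (hπ : RowSpreading π) :
    IsLRLR π := by
  obtain ⟨U, hU⟩ := exists_bijective_domRestrict_of_forall_extend (zigzag π)
    fun _ hS hinj i _ hc => zigzag_extend hπ hS hinj i hc
  exact isLRLR_of_bijective π (hU 0) (hU 1) (hU 2) (hU 3)
    (fun _ => rfl) (fun _ => rfl) (fun _ => rfl) (fun _ => rfl)

end BackAndForth

/-- For countable sets `A` and `B`, `Sym(A × B) = G_L·G_R·G_L·G_R ∪ G_R·G_L·G_R·G_L`:
every permutation of `A × B` is a composition of four permutations alternating between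
the column group `G_L` and the row group `G_R`, in one of the two orders. -/
theorem countable_alternation_diameter_four
    (A B : Type*) [Countable A] [Countable B] (π : Equiv.Perm (A × B)) :
    (∃ l₁ r₁ l₂ r₂ : Equiv.Perm (A × B),
      (∀ p, (l₁ p).2 = p.2) ∧ (∀ p, (r₁ p).1 = p.1) ∧
      (∀ p, (l₂ p).2 = p.2) ∧ (∀ p, (r₂ p).1 = p.1) ∧
      ∀ p, π p = l₁ (r₁ (l₂ (r₂ p)))) ∨
    (∃ r₁ l₁ r₂ l₂ : Equiv.Perm (A × B),
      (∀ p, (r₁ p).1 = p.1) ∧ (∀ p, (l₁ p).2 = p.2) ∧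
      (∀ p, (r₂ p).1 = p.1) ∧ (∀ p, (l₂ p).2 = p.2) ∧
      ∀ p, π p = r₁ (l₁ (r₂ (l₂ p)))) := by
  rcases finite_or_infinite A with hA | hA <;> rcases finite_or_infinite B with hB | hB
  · exact .inl (isLRLR_of_finite π)
  · exact .inr (isRLRL_of_isLRLR_permCongr (isLRLR_of_rowSpreading (rowSpreading_of_finite _)))
  · exact .inl (isLRLR_of_rowSpreading (rowSpreading_of_finite π))
  · rcases rowSpreading_or_rowSpreading_permCongr π with h | h
    · exact .inl (isLRLR_of_rowSpreading h)
    · exact .inr (isRLRL_of_isLRLR_permCongr (isLRLR_of_rowSpreading h))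
end

section
/- Let A and B be countably infinite sets. Then Sym(A × B) ≠ G_L·G_R·G_L·G_R and Sym(A × B) ≠ G_R·G_L·G_R·G_L; that is, there exists a permutation of A × B that cannot be written as l₁ ∘ r₁ ∘ l₂ ∘ r₂ with l₁, l₂ ∈ G_L, r₁, r₂ ∈ G_R, and there exists a permutation of A × B that cannot be written as r₁ ∘ l₁ ∘ r₂ ∘ l₂ with r₁, r₂ ∈ G_R, l₁, l₂ ∈ G_L. -/
/-!
Fix a column `a` and a row `b`, and let `π` be a permutation sending every point off column `a`
into row `b` (countability makes such a `π` exist). If `π = l₁ r₁ l₂ r₂`, then `θ = l₂ r₂` maps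
column `a` onto a set `U` on which the second coordinate is injective (`r₂` keeps the column,
`l₂` keeps second coordinates), while `θ = r₁⁻¹ l₁⁻¹ π` maps the rest into a set `V` on which the
first coordinate is injective. But `U ∪ V` would then be everything, and a `3 × 3` box meets `U`
in at most `3` and `V` in at most `3` points. Inverting handles the order `r₁ l₁ r₂ l₂`.
-/

open Equiv Set
open scoped Finset

section

variable {α β : Type*}

def leftGroup (α β : Type*) : Subgroup (Perm (α × β)) where
  carrier := {g | ∀ p, (g p).2 = p.2}
  mul_mem' hg hh p := (hg _).trans (hh p)
  one_mem' _ := rfl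
  inv_mem' {g} hg p := by simpa using (hg (g⁻¹ p)).symm

def rightGroup (α β : Type*) : Subgroup (Perm (α × β)) where
  carrier := {g | ∀ p, (g p).1 = p.1}
  mul_mem' hg hh p := (hg _).trans (hh p)
  one_mem' _ := rfl
  inv_mem' {g} hg p := by simpa using (hg (g⁻¹ p)).symm

lemma injOn_snd_setOf_fst_eq (a : α) : InjOn Prod.snd {p : α × β | p.1 = a} :=
  fun _ hp _ hq h ↦ Prod.ext (hp.trans hq.symm) h

lemma injOn_fst_setOf_snd_eq (b : β) : InjOn Prod.fst {p : α × β | p.2 = b} :=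
  fun _ hp _ hq h ↦ Prod.ext h (hp.trans hq.symm)

lemma mapsTo_setOf_fst_eq_of_mem_rightGroup {r : Perm (α × β)} (hr : r ∈ rightGroup α β)
    (a : α) : MapsTo r {p | p.1 = a} {p | p.1 = a} :=
  fun p hp ↦ (hr p).trans hp

lemma mapsTo_setOf_snd_eq_of_mem_leftGroup {l : Perm (α × β)} (hl : l ∈ leftGroup α β)
    (b : β) : MapsTo l {p | p.2 = b} {p | p.2 = b} :=
  fun p hp ↦ (hl p).trans hp

lemma Set.InjOn.image_of_mem_leftGroup {S : Set (α × β)} (hS : InjOn Prod.snd S)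
    {l : Perm (α × β)} (hl : l ∈ leftGroup α β) : InjOn Prod.snd (l '' S) :=
  InjOn.image_of_comp (by rwa [show Prod.snd ∘ l = Prod.snd from funext hl])

lemma Set.InjOn.image_of_mem_rightGroup {S : Set (α × β)} (hS : InjOn Prod.fst S)
    {r : Perm (α × β)} (hr : r ∈ rightGroup α β) : InjOn Prod.fst (r '' S) :=
  InjOn.image_of_comp (by rwa [show Prod.fst ∘ r = Prod.fst from funext hr])

theorem union_ne_univ_of_injOn_snd_of_injOn_fst [Infinite α] [Infinite β]
    {U V : Set (α × β)} (hU : InjOn Prod.snd U) (hV : InjOn Prod.fst V) : U ∪ V ≠ univ := by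
  classical
  intro hUV
  obtain ⟨s, hs⟩ := Infinite.exists_subset_card_eq α 3
  obtain ⟨t, ht⟩ := Infinite.exists_subset_card_eq β 3
  have hcover : s ×ˢ t ⊆ {p ∈ s ×ˢ t | p ∈ U} ∪ {p ∈ s ×ˢ t | p ∈ V} := by
    intro p hp
    have : p ∈ U ∪ V := hUV ▸ mem_univ p
    rcases this with h | h <;> simp [hp, h]
  have hcardU : #{p ∈ s ×ˢ t | p ∈ U} ≤ #t :=
    Finset.card_le_card_of_injOn Prod.snd
      (fun p hp ↦ (Finset.mem_product.1 (Finset.mem_filter.1 hp).1).2)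
      (hU.mono fun p hp ↦ (Finset.mem_filter.1 hp).2)
  have hcardV : #{p ∈ s ×ˢ t | p ∈ V} ≤ #s :=
    Finset.card_le_card_of_injOn Prod.fst
      (fun p hp ↦ (Finset.mem_product.1 (Finset.mem_filter.1 hp).1).1)
      (hV.mono fun p hp ↦ (Finset.mem_filter.1 hp).2)
  have := (Finset.card_le_card hcover).trans (Finset.card_union_le _ _)
  rw [Finset.card_product, hs, ht] at this
  omega

theorem ne_mul_mul_mul_of_forall_fst_eq_or_snd_eq [Infinite α] [Infinite β]
    {π : Perm (α × β)} {a : α} {b : β} (hπ : ∀ p, p.1 = a ∨ (π p).2 = b)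
    {l₁ r₁ l₂ r₂ : Perm (α × β)} (hl₁ : l₁ ∈ leftGroup α β) (hr₁ : r₁ ∈ rightGroup α β)
    (hl₂ : l₂ ∈ leftGroup α β) (hr₂ : r₂ ∈ rightGroup α β) :
    π ≠ l₁ * r₁ * l₂ * r₂ := by
  intro hfac
  have hU : InjOn Prod.snd (l₂ '' (r₂ '' {p | p.1 = a})) :=
    ((injOn_snd_setOf_fst_eq a).mono
      (mapsTo_setOf_fst_eq_of_mem_rightGroup hr₂ a).image_subset).image_of_mem_leftGroup hl₂
  have hV : InjOn Prod.fst (⇑r₁⁻¹ '' (⇑l₁⁻¹ '' {p | p.2 = b})) :=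
    ((injOn_fst_setOf_snd_eq b).mono
      (mapsTo_setOf_snd_eq_of_mem_leftGroup (inv_mem hl₁) b).image_subset).image_of_mem_rightGroup
      (inv_mem hr₁)
  refine union_ne_univ_of_injOn_snd_of_injOn_fst hU hV (eq_univ_of_forall fun q ↦ ?_)
  obtain ⟨p, rfl⟩ := (l₂ * r₂).surjective q
  rcases hπ p with hp | hp
  · exact Or.inl ⟨r₂ p, ⟨p, hp, rfl⟩, rfl⟩
  · refine Or.inr ⟨l₁⁻¹ (π p), ⟨π p, hp, rfl⟩, ?_⟩
    simp [hfac, Perm.mul_apply]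

theorem exists_perm_forall_fst_eq_or_snd_eq [Countable α] [Infinite α] [Countable β]
    [Infinite β] (a : α) (b : β) : ∃ π : Perm (α × β), ∀ p, p.1 = a ∨ (π p).2 = b := by
  classical
  obtain ⟨a', ha'⟩ := exists_ne a
  obtain ⟨b', hb'⟩ := exists_ne b
  have : Infinite {p : α × β // p.1 = a} :=
    (infinite_of_injective_forall_mem (Prod.mk_right_injective a) fun _ ↦ rfl).to_subtype
  have : Infinite {p : α × β // ¬p.1 = a} :=
    (infinite_of_injective_forall_mem (Prod.mk_right_injective a') fun _ ↦ ha').to_subtype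
  have : Infinite {p : α × β // p.2 ≠ b} :=
    (infinite_of_injective_forall_mem (Prod.mk_left_injective b') fun _ ↦ hb').to_subtype
  have : Infinite {p : α × β // ¬p.2 ≠ b} :=
    (infinite_of_injective_forall_mem (Prod.mk_left_injective b) fun _ ↦ not_not.2 rfl).to_subtype
  obtain ⟨e⟩ : Nonempty ({p : α × β // p.1 = a} ≃ {p : α × β // p.2 ≠ b}) :=
    nonempty_equiv_of_countable
  obtain ⟨f⟩ : Nonempty ({p : α × β // ¬p.1 = a} ≃ {p : α × β // ¬p.2 ≠ b}) :=
    nonempty_equiv_of_countable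
  refine ⟨subtypeCongr e f, fun p ↦ or_iff_not_imp_left.2 fun hp ↦ ?_⟩
  simpa [subtypeCongr, hp] using (f ⟨p, hp⟩).2

end

/-- For countably infinite sets `A` and `B`, neither `G_L·G_R·G_L·G_R` nor
`G_R·G_L·G_R·G_L` is all of `Sym(A × B)`. -/
theorem countable_infinite_not_four_one_order
    (A B : Type*) [Countable A] [Infinite A] [Countable B] [Infinite B] :
    (∃ π : Equiv.Perm (A × B),
      ¬ ∃ l₁ r₁ l₂ r₂ : Equiv.Perm (A × B),
        (∀ p, (l₁ p).2 = p.2) ∧ (∀ p, (r₁ p).1 = p.1) ∧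
        (∀ p, (l₂ p).2 = p.2) ∧ (∀ p, (r₂ p).1 = p.1) ∧
        ∀ p, π p = l₁ (r₁ (l₂ (r₂ p)))) ∧
    (∃ π : Equiv.Perm (A × B),
      ¬ ∃ r₁ l₁ r₂ l₂ : Equiv.Perm (A × B),
        (∀ p, (r₁ p).1 = p.1) ∧ (∀ p, (l₁ p).2 = p.2) ∧
        (∀ p, (r₂ p).1 = p.1) ∧ (∀ p, (l₂ p).2 = p.2) ∧
        ∀ p, π p = r₁ (l₁ (r₂ (l₂ p)))) := by
  obtain ⟨π, hπ⟩ := exists_perm_forall_fst_eq_or_snd_eq (Classical.arbitrary A)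
    (Classical.arbitrary B)
  refine ⟨⟨π, ?_⟩, ⟨π⁻¹, ?_⟩⟩
  · rintro ⟨l₁, r₁, l₂, r₂, hl₁, hr₁, hl₂, hr₂, hfac⟩
    exact ne_mul_mul_mul_of_forall_fst_eq_or_snd_eq hπ hl₁ hr₁ hl₂ hr₂ (Equiv.ext hfac)
  · rintro ⟨r₁, l₁, r₂, l₂, hr₁, hl₁, hr₂, hl₂, hfac⟩
    refine ne_mul_mul_mul_of_forall_fst_eq_or_snd_eq hπ (inv_mem hl₂) (inv_mem hr₂)
      (inv_mem hl₁) (inv_mem hr₁) ?_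
    rw [← inv_inv π, show π⁻¹ = r₁ * l₁ * r₂ * l₂ from Equiv.ext hfac]
    simp only [mul_inv_rev, mul_assoc]
end

section
/- Let A be a set with at least two elements and let B be an infinite set. Then Sym(A × B) ≠ G_R·G_L·G_R; that is, there exists a permutation of A × B that cannot be written as r₁ ∘ l ∘ r₂ with r₁, r₂ ∈ G_R and l ∈ G_L. -/
/-!
Writing `π = r₁ ∘ l ∘ r₂`, the row permutations `r₁, r₂` do not change first coordinates, so for
`a₀ ≠ a₁` and any `b₀` we may choose `b₁` with `r₂ (a₀, b₀)` and `r₂ (a₁, b₁)` in the same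
column; the column permutation `l` keeps them in that column, hence sends them to different rows,
so `π (a₀, b₀)` and `π (a₁, b₁)` lie in different rows. When `B` is infinite, a Hilbert-hotel
shift along a bi-infinite path that runs through row `a₀` and then through row `a₁` maps a point of
row `a₀` into row `a₁` and all of row `a₁` into itself, so it cannot be of this form.
-/

open Equiv Function

section RowColumn

variable {A B : Type*}

theorem exists_apply_eq_of_fst_apply_eq {r : Perm (A × B)} (hr : ∀ p, (r p).1 = p.1)
    (a : A) (c : B) : ∃ b, r (a, b) = (a, c) := by
  have hsymm : r.symm (a, c) = (a, (r.symm (a, c)).2) :=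
    Prod.ext (by simpa using (hr (r.symm (a, c))).symm) rfl
  exact ⟨_, by rw [← hsymm, apply_symm_apply]⟩

theorem fst_apply_ne_of_snd_apply_eq {l : Perm (A × B)} (hl : ∀ p, (l p).2 = p.2)
    {a₀ a₁ : A} (ha : a₀ ≠ a₁) (c : B) : (l (a₀, c)).1 ≠ (l (a₁, c)).1 := fun h =>
  ha (congrArg Prod.fst (l.injective (Prod.ext h ((hl (a₀, c)).trans (hl (a₁, c)).symm))))

theorem exists_fst_apply_ne_of_eq_row_col_row {π r₁ l r₂ : Perm (A × B)}
    (h₁ : ∀ p, (r₁ p).1 = p.1) (hl : ∀ p, (l p).2 = p.2) (h₂ : ∀ p, (r₂ p).1 = p.1)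
    (hπ : ∀ p, π p = r₁ (l (r₂ p))) {a₀ a₁ : A} (ha : a₀ ≠ a₁) (b₀ : B) :
    ∃ b₁, (π (a₀, b₀)).1 ≠ (π (a₁, b₁)).1 := by
  obtain ⟨b₁, hb₁⟩ := exists_apply_eq_of_fst_apply_eq h₂ a₁ (r₂ (a₀, b₀)).2
  have hb₀ : r₂ (a₀, b₀) = (a₀, (r₂ (a₀, b₀)).2) := Prod.ext (h₂ _) rfl
  refine ⟨b₁, ?_⟩
  rw [hπ, hπ, h₁, h₁, hb₁, hb₀]
  exact fst_apply_ne_of_snd_apply_eq hl ha _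

theorem exists_perm_fst_apply_eq_of_infinite [Infinite B] {a₀ a₁ : A} (ha : a₀ ≠ a₁) :
    ∃ π : Perm (A × B), ∃ b₀, (π (a₀, b₀)).1 = a₁ ∧ ∀ b, (π (a₁, b)).1 = a₁ := by
  let e : ℤ ↪ B := Equiv.intEquivNat.toEmbedding.trans (Infinite.natEmbedding B)
  let row : ℤ → A := fun n => if 0 ≤ n then a₁ else a₀
  have row_eq_iff : ∀ n, row n = a₁ ↔ 0 ≤ n := fun n => by
    by_cases hn : 0 ≤ n <;> simp [row, hn, ha]
  let f : ℤ ↪ A × B := ⟨fun n => (row n, e n), fun m n h => e.injective (congrArg Prod.snd h)⟩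
  refine ⟨(Equiv.addRight 1).viaEmbedding f, e (-1), ?_, fun b => ?_⟩
  · exact (Perm.viaEmbedding_apply _ f (-1)).symm ▸ (row_eq_iff 0).2 le_rfl
  · by_cases hb : (a₁, b) ∈ Set.range f
    · obtain ⟨n, hn⟩ := hb
      have hn₀ : 0 ≤ n := (row_eq_iff n).1 (congrArg Prod.fst hn)
      rw [← hn, Perm.viaEmbedding_apply]
      exact (row_eq_iff (n + 1)).2 (by omega)
    · rw [Perm.viaEmbedding_apply_of_notMem _ _ _ hb]

end RowColumn

/-- If `A` has at least two elements and `B` is infinite, then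
`Sym(A × B) ≠ G_R·G_L·G_R`: some permutation of `A × B` is not a composition
`r₁ ∘ l ∘ r₂` with `r₁, r₂` in the row group and `l` in the column group. -/
theorem not_RLR_of_infinite (A B : Type*) [Nontrivial A] [Infinite B] :
    ∃ π : Equiv.Perm (A × B),
      ¬ ∃ r₁ l r₂ : Equiv.Perm (A × B),
        (∀ p, (r₁ p).1 = p.1) ∧ (∀ p, (l p).2 = p.2) ∧ (∀ p, (r₂ p).1 = p.1) ∧
        ∀ p, π p = r₁ (l (r₂ p)) := by
  obtain ⟨a₀, a₁, ha⟩ := exists_pair_ne A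
  obtain ⟨π, b₀, hπ₀, hπ₁⟩ := exists_perm_fst_apply_eq_of_infinite (B := B) ha
  refine ⟨π, fun ⟨r₁, l, r₂, h₁, hl, h₂, hπ⟩ => ?_⟩
  obtain ⟨b₁, hb₁⟩ := exists_fst_apply_ne_of_eq_row_col_row h₁ hl h₂ hπ ha b₀
  exact hb₁ (hπ₀.trans (hπ₁ b₁).symm)
end

section
/- Let A be an arbitrary set and let B be a finite set. Then Sym(A × B) = G_R·G_L·G_R; that is, every permutation π of A × B can be written as π = r₁ ∘ l ∘ r₂ with r₁, r₂ ∈ G_R and l ∈ G_L. -/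
/-!
Colour the points of `A × B` so that every row `{a} × B` and every image row `π({a} × B)` sees
each colour of `B` exactly once; then `r₂` sends a point of row `a` to the column named by its
colour, `l` moves it along that column to the row it is sent to by `π`, and `r₁` repairs the
position inside that row. Such a colouring is built one colour at a time: the rows of `A × S` and
of `π(A × S)` form a `|S|`-regular bipartite multigraph on `A`, which has a perfect matching by
Hall's theorem (applied to `π` and to `π⁻¹`) followed by Schröder–Bernstein; the matched points
are moved into a single column, and the remaining `|S| - 1` columns are coloured recursively.
-/

open Equiv Finset Function

section

variable {A B : Type*}

def rowGroup (A B : Type*) : Subgroup (Perm (A × B)) where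
  carrier := {σ | ∀ p, (σ p).1 = p.1}
  mul_mem' hσ hτ p := (hσ _).trans (hτ p)
  one_mem' _ := rfl
  inv_mem' {σ} hσ p := by simpa using (hσ (σ⁻¹ p)).symm

def columnGroup (A B : Type*) : Subgroup (Perm (A × B)) where
  carrier := {σ | ∀ p, (σ p).2 = p.2}
  mul_mem' hσ hτ p := (hσ _).trans (hτ p)
  one_mem' _ := rfl
  inv_mem' {σ} hσ p := by simpa using (hσ (σ⁻¹ p)).symm

theorem mem_rowGroup {σ : Perm (A × B)} : σ ∈ rowGroup A B ↔ ∀ p, (σ p).1 = p.1 := Iff.rfl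

theorem mem_columnGroup {σ : Perm (A × B)} : σ ∈ columnGroup A B ↔ ∀ p, (σ p).2 = p.2 :=
  Iff.rfl

theorem prodCongrRight_mem_rowGroup (e : A → Perm B) : prodCongrRight e ∈ rowGroup A B :=
  fun _ => rfl

theorem prodCongrLeft_mem_columnGroup (e : B → Perm A) : prodCongrLeft e ∈ columnGroup A B :=
  fun _ => rfl

theorem Equiv.swap_apply_mem_iff [DecidableEq B] {S : Finset B} {x y : B} (hx : x ∈ S)
    (hy : y ∈ S) (b : B) : swap x y b ∈ S ↔ b ∈ S := by
  rw [swap_apply_def]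
  split_ifs <;> simp_all

theorem exists_mem_rowGroup_mem_columnGroup_eq_mul (ρ : Perm (A × B))
    (hρ : ∀ b, Bijective fun a => (ρ (a, b)).1) :
    ∃ r ∈ rowGroup A B, ∃ l ∈ columnGroup A B, ρ = r * l := by
  let l : Perm (A × B) := prodCongrLeft fun b => ofBijective _ (hρ b)
  refine ⟨ρ * l⁻¹, fun p => ?_, l, prodCongrLeft_mem_columnGroup _, by simp⟩
  obtain ⟨q, rfl⟩ := l.surjective p
  rw [Perm.mul_apply, Perm.inv_eq_iff_eq.2 rfl]
  rfl

theorem exists_injective_of_mapsTo_prod {S : Finset B} (hS : S.Nonempty) {φ : A × B → A × B}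
    (hφ : Injective φ) (hφS : ∀ p, p.2 ∈ S → (φ p).2 ∈ S) :
    ∃ f : A → A, Injective f ∧ ∀ a, ∃ b ∈ S, (φ (a, b)).1 = f a := by
  classical
  let t : A → Finset A := fun a => S.image fun b => (φ (a, b)).1
  have hall : ∀ s : Finset A, #s ≤ #(s.biUnion t) := by
    intro s
    have hcard : #(s ×ˢ S) ≤ #(s.biUnion t ×ˢ S) := by
      refine card_le_card_of_injOn φ (fun ⟨a, b⟩ hp => ?_) hφ.injOn
      simp only [coe_product, Set.mem_prod, mem_coe] at hp ⊢
      exact ⟨mem_biUnion.2 ⟨a, hp.1, mem_image_of_mem _ hp.2⟩, hφS _ hp.2⟩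
    rw [card_product, card_product] at hcard
    exact Nat.le_of_mul_le_mul_right hcard hS.card_pos
  obtain ⟨f, hf, hft⟩ := (all_card_le_biUnion_card_iff_exists_injective t).1 hall
  exact ⟨f, hf, fun a => by simpa [t] using hft a⟩

theorem exists_equiv_of_perm_prod {S : Finset B} (hS : S.Nonempty) (π : Perm (A × B))
    (hπS : ∀ p, p.2 ∈ S ↔ (π p).2 ∈ S) :
    ∃ h : A ≃ A, ∀ a, ∃ b ∈ S, (π (a, b)).1 = h a := by
  have hπS' : ∀ p, p.2 ∈ S → (π.symm p).2 ∈ S := fun p hp => (hπS _).2 (by simpa using hp)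
  obtain ⟨f, hf, hfπ⟩ := exists_injective_of_mapsTo_prod hS π.injective fun p => (hπS p).1
  obtain ⟨g, hg, hgπ⟩ := exists_injective_of_mapsTo_prod hS π.symm.injective hπS'
  have hgπ' : ∀ a', ∃ b ∈ S, (π (g a', b)).1 = a' := by
    intro a'
    obtain ⟨b, hb, hgb⟩ := hgπ a'
    exact ⟨(π.symm (a', b)).2, hπS' _ hb, by rw [← hgb, Prod.mk.eta, apply_symm_apply]⟩
  obtain ⟨h, hh, hhπ⟩ := Embedding.schroeder_bernstein_of_rel hf hg
    (fun a a' => ∃ b ∈ S, (π (a, b)).1 = a') hfπ hgπ'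
  exact ⟨ofBijective h hh, hhπ⟩

theorem snd_eq_iff_of_apply_eq (ρ : Perm (A × B)) {b₀ : B} {h : A → A} (hh : Surjective h)
    (hρ : ∀ a, ρ (a, b₀) = (h a, b₀)) (p : A × B) : p.2 = b₀ ↔ (ρ p).2 = b₀ := by
  obtain ⟨a, b⟩ := p
  constructor
  · rintro rfl
    rw [hρ]
  · intro hp
    obtain ⟨a', ha'⟩ := hh (ρ (a, b)).1
    have : ρ (a, b) = ρ (a', b₀) := by rw [hρ, ha', ← hp]
    exact congrArg Prod.snd (ρ.injective this)

/-- `σ` moves a perfect matching of the row multigraph of `π` on `A × S` into column `b₀` of the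
source, `τ` moves its image into column `b₀` of the target. -/
theorem exists_peel_column [DecidableEq B] {S : Finset B} {b₀ : B} (hb₀ : b₀ ∈ S)
    (π : Perm (A × B)) (hπS : ∀ p, p.2 ∈ S ↔ (π p).2 ∈ S) :
    ∃ σ ∈ rowGroup A B, (∀ p, p.2 ∉ S → σ p = p) ∧ ∃ τ ∈ rowGroup A B, ∃ h : A ≃ A,
      (∀ a, τ (π (σ (a, b₀))) = (h a, b₀)) ∧
      ∀ p, p.2 ∈ S.erase b₀ ↔ (τ (π (σ p))).2 ∈ S.erase b₀ := by
  obtain ⟨h, hh⟩ := exists_equiv_of_perm_prod ⟨b₀, hb₀⟩ π hπS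
  choose m hmS hm using hh
  set s : A → B := fun a => (π (a, m a)).2
  have hsS : ∀ a, s a ∈ S := fun a => (hπS _).1 (hmS a)
  set σ : Perm (A × B) := prodCongrRight fun a => swap b₀ (m a)
  set τ : Perm (A × B) := prodCongrRight fun x => swap (s (h.symm x)) b₀
  have hρb₀ : ∀ a, τ (π (σ (a, b₀))) = (h a, b₀) := by
    intro a
    have : π (a, m a) = (h a, s a) := Prod.ext (hm a) rfl
    simp [σ, τ, this]
  have hρS : ∀ p, p.2 ∈ S ↔ (τ (π (σ p))).2 ∈ S := by
    rintro ⟨a, b⟩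
    rw [show (τ _).2 = swap (s (h.symm _)) b₀ _ from rfl]
    simp only [σ, prodCongrRight_apply]
    rw [swap_apply_mem_iff (hsS _) hb₀, ← hπS, swap_apply_mem_iff hb₀ (hmS a)]
  have hρcol := snd_eq_iff_of_apply_eq (τ * π * σ) h.surjective hρb₀
  refine ⟨σ, prodCongrRight_mem_rowGroup _, ?_, τ, prodCongrRight_mem_rowGroup _, h, hρb₀,
    fun p => ?_⟩
  · rintro ⟨a, b⟩ hb
    simp only [σ, prodCongrRight_apply]
    rw [swap_apply_of_ne_of_ne (ne_of_mem_of_not_mem hb₀ hb).symm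
      (ne_of_mem_of_not_mem (hmS a) hb).symm]
  · rw [mem_erase, mem_erase, hρS p]
    exact and_congr_left' (not_congr (hρcol p))

theorem exists_mem_rowGroup_bijective_fst (S : Finset B) (π : Perm (A × B))
    (hπS : ∀ p, p.2 ∈ S ↔ (π p).2 ∈ S) :
    ∃ σ ∈ rowGroup A B, (∀ p, p.2 ∉ S → σ p = p) ∧
      ∀ b ∈ S, Bijective fun a => (π (σ (a, b))).1 := by
  classical
  induction S using Finset.induction generalizing π with
  | empty => exact ⟨1, one_mem _, fun _ _ => rfl, by simp⟩
  | insert b₀ S hb₀ ih =>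
    obtain ⟨σ₀, hσ₀, hσ₀S, τ, hτ, h, hρb₀, hρS⟩ := exists_peel_column (mem_insert_self b₀ S) π hπS
    rw [erase_insert hb₀] at hρS
    obtain ⟨σ, hσ, hσS, hbij⟩ := ih (τ * π * σ₀) hρS
    have hfst : ∀ x, (π (σ₀ x)).1 = (τ (π (σ₀ x))).1 := fun x => (mem_rowGroup.1 hτ _).symm
    refine ⟨σ₀ * σ, mul_mem hσ₀ hσ, fun p hp => ?_, ?_⟩
    · rw [Perm.mul_apply, hσS p fun h => hp (mem_insert_of_mem h), hσ₀S p hp]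
    · simp only [forall_mem_insert, Perm.mul_apply, hfst]
      refine ⟨?_, hbij⟩
      simp only [fun a => hσS (a, b₀) hb₀, hρb₀]
      exact h.bijective

end

/-- If `B` is finite (and `A` arbitrary), then `Sym(A × B) = G_R·G_L·G_R`:
every permutation of `A × B` is a composition `r₁ ∘ l ∘ r₂` with `r₁, r₂` in the
row group and `l` in the column group. -/
theorem RLR_of_finite_right (A B : Type*) [Finite B] (π : Equiv.Perm (A × B)) :
    ∃ r₁ l r₂ : Equiv.Perm (A × B),
      (∀ p, (r₁ p).1 = p.1) ∧ (∀ p, (l p).2 = p.2) ∧ (∀ p, (r₂ p).1 = p.1) ∧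
      ∀ p, π p = r₁ (l (r₂ p)) := by
  have := Fintype.ofFinite B
  obtain ⟨σ, hσ, -, hbij⟩ := exists_mem_rowGroup_bijective_fst univ π (by simp)
  obtain ⟨r, hr, l, hl, hπσ⟩ :=
    exists_mem_rowGroup_mem_columnGroup_eq_mul (π * σ) fun b => hbij b (mem_univ b)
  refine ⟨r, l, σ⁻¹, mem_rowGroup.1 hr, mem_columnGroup.1 hl, mem_rowGroup.1 (inv_mem hσ),
    fun p => ?_⟩
  rw [← Perm.mul_apply, ← Perm.mul_apply, ← hπσ, mul_inv_cancel_right]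
end

section
/- Let K be a field and let V and W be finite-dimensional vector spaces over K. Let G = GL(V × W) be the group of K-linear automorphisms of V × W, let G_L ≤ G be the subgroup of linear automorphisms g with g(v,w) = (v', w) for some v' (for all (v,w)), and let G_R ≤ G be the subgroup of linear automorphisms g with g(v,w) = (v, w') for some w'. Then G = G_L·G_R·G_L and G = G_R·G_L·G_R; that is, every K-linear automorphism of V × W can be written as g₁ ∘ g₂ ∘ g₃ with g₁, g₃ ∈ G_L, g₂ ∈ G_R, and also as h₁ ∘ h₂ ∘ h₃ with h₁, h₃ ∈ G_R, h₂ ∈ G_L. -/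
/-!
Write `φ` in block form; its second row `(c d) : V × W → W` is surjective, i.e.
`range c ⊔ range d = ⊤`. Since `W` is finite-dimensional there is `B : W → V` with `c ∘ B + d`
invertible: let `B` map `ker d` isomorphically (via a lift through `c`) onto a complement of
`range d` inside `range c`. Then `φ ∘ shear(B)` has an invertible lower-right block, so it is
`g₁ ∘ g₂` with `g₂ = (x, y) ↦ (x, c x + (c ∘ B + d) y)` fixing the first coordinate and `g₁`
fixing the second. Swapping the two factors gives the other decomposition.
-/

open LinearMap Module

section

variable {K V W : Type*} [Field K] [AddCommGroup V] [Module K V] [AddCommGroup W] [Module K W]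

theorem exists_range_le_bijective_add [FiniteDimensional K W] {U : Submodule K W}
    {d : W →ₗ[K] W} (h : Codisjoint U (range d)) :
    ∃ f : W →ₗ[K] W, range f ≤ U ∧ Function.Bijective (f + d) := by
  obtain ⟨S, hSU, hS⟩ := h.exists_isCompl
  obtain ⟨N, hN⟩ := (ker d).exists_isCompl
  have hrank : finrank K (ker d) = finrank K S := by
    have := Submodule.finrank_add_eq_of_isCompl hS
    have := finrank_range_add_finrank_ker d
    omega
  let e := LinearEquiv.ofFinrankEq _ _ hrank
  let f := S.subtype ∘ₗ e.toLinearMap ∘ₗ (ker d).projectionOnto N hN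
  have hfS : ∀ z, f z ∈ S := fun z => (e _).2
  refine ⟨f, (range_le_iff_comap.2 (eq_top_iff.2 fun z _ => hfS z)).trans hSU, ?_⟩
  have hinj : Function.Injective (f + d) := by
    refine (injective_iff_map_eq_zero _).2 fun z hz => ?_
    have hfz : f z = -d z := eq_neg_of_add_eq_zero_left hz
    have hfz0 : f z = 0 :=
      Submodule.disjoint_def.1 hS.disjoint _ (hfS z) ⟨-z, by rw [map_neg, hfz]⟩
    have hdz : z ∈ ker d := by simpa [hfz0] using hfz
    have : e ⟨z, hdz⟩ = 0 := by
      simpa [f, Submodule.projectionOnto_apply_of_mem_left hN hdz] using hfz0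
    simpa using e.map_eq_zero_iff.1 this
  exact ⟨hinj, injective_iff_surjective.1 hinj⟩

theorem exists_bijective_comp_add [FiniteDimensional K W] {c : V →ₗ[K] W} {d : W →ₗ[K] W}
    (h : Codisjoint (range c) (range d)) :
    ∃ B : W →ₗ[K] V, Function.Bijective (c ∘ₗ B + d) := by
  obtain ⟨f, hfc, hf⟩ := exists_range_le_bijective_add h
  obtain ⟨B, hB⟩ := Module.projective_lifting_property c.rangeRestrict
    (f.codRestrict _ fun z => hfc (mem_range_self f z)) c.surjective_rangeRestrict
  refine ⟨B, ?_⟩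
  convert hf
  exact congr(((range c).subtype ∘ₗ $hB))

def shearFst (B : W →ₗ[K] V) : (V × W) ≃ₗ[K] (V × W) :=
  LinearEquiv.prodComm K V W ≪≫ₗ (LinearEquiv.refl K W).skewProd (LinearEquiv.refl K V) B ≪≫ₗ
    LinearEquiv.prodComm K W V

@[simp]
theorem shearFst_apply (B : W →ₗ[K] V) (p : V × W) : shearFst B p = (p.1 + B p.2, p.2) := by
  simp [shearFst]

theorem exists_fixSnd_fixFst_fixSnd [FiniteDimensional K W] (φ : (V × W) ≃ₗ[K] (V × W)) :
    ∃ g₁ g₂ g₃ : (V × W) ≃ₗ[K] (V × W),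
      (∀ p, (g₁ p).2 = p.2) ∧ (∀ p, (g₂ p).1 = p.1) ∧ (∀ p, (g₃ p).2 = p.2) ∧
      ∀ p, φ p = g₁ (g₂ (g₃ p)) := by
  let c := snd K V W ∘ₗ φ.toLinearMap ∘ₗ inl K V W
  let d := snd K V W ∘ₗ φ.toLinearMap ∘ₗ inr K V W
  have hφ : ∀ p, (φ p).2 = c p.1 + d p.2 := fun p => by
    simp [c, d, ← Prod.snd_add, ← map_add]
  have hcd : Codisjoint (range c) (range d) := by
    refine codisjoint_iff.2 (eq_top_iff.2 fun w _ => ?_)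
    obtain ⟨p, hp⟩ := φ.surjective (0, w)
    simpa [← hφ, hp] using Submodule.add_mem_sup (mem_range_self c p.1) (mem_range_self d p.2)
  obtain ⟨B, hB⟩ := exists_bijective_comp_add hcd
  let g₂ := (LinearEquiv.refl K V).skewProd (LinearEquiv.ofBijective _ hB) c
  refine ⟨g₂.symm ≪≫ₗ shearFst B ≪≫ₗ φ, g₂, shearFst (-B), fun q => ?_, fun p => rfl,
    fun p => rfl, fun p => by simp⟩
  obtain ⟨p, rfl⟩ := g₂.surjective q
  rw [LinearEquiv.trans_apply, LinearEquiv.trans_apply, LinearEquiv.symm_apply_apply, hφ,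
    shearFst_apply]
  simp only [g₂, LinearEquiv.skewProd_apply, LinearEquiv.refl_apply,
    LinearEquiv.ofBijective_apply, LinearMap.add_apply, coe_comp, Function.comp_apply, map_add]
  abel

theorem exists_fixFst_fixSnd_fixFst [FiniteDimensional K V] (φ : (V × W) ≃ₗ[K] (V × W)) :
    ∃ h₁ h₂ h₃ : (V × W) ≃ₗ[K] (V × W),
      (∀ p, (h₁ p).1 = p.1) ∧ (∀ p, (h₂ p).2 = p.2) ∧ (∀ p, (h₃ p).1 = p.1) ∧
      ∀ p, φ p = h₁ (h₂ (h₃ p)) := by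
  let σ := LinearEquiv.prodComm K V W
  obtain ⟨g₁, g₂, g₃, hg₁, hg₂, hg₃, hφ⟩ := exists_fixSnd_fixFst_fixSnd (σ.symm ≪≫ₗ φ ≪≫ₗ σ)
  refine ⟨σ ≪≫ₗ g₁ ≪≫ₗ σ.symm, σ ≪≫ₗ g₂ ≪≫ₗ σ.symm, σ ≪≫ₗ g₃ ≪≫ₗ σ.symm,
    fun p => hg₁ (σ p), fun p => hg₂ (σ p), fun p => hg₃ (σ p), fun p => ?_⟩
  simpa using congrArg σ.symm (hφ (σ p))

end

/-- For finite-dimensional vector spaces `V`, `W` over a field `K`,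
`GL(V × W) = G_L·G_R·G_L = G_R·G_L·G_R`: every linear automorphism of `V × W`
is a composition of three linear automorphisms alternating between those fixing
the second coordinate (`G_L`) and those fixing the first coordinate (`G_R`). -/
theorem finvect_alternation_diameter_three
    (K V W : Type*) [Field K] [AddCommGroup V] [Module K V] [FiniteDimensional K V]
    [AddCommGroup W] [Module K W] [FiniteDimensional K W]
    (φ : (V × W) ≃ₗ[K] (V × W)) :
    (∃ g₁ g₂ g₃ : (V × W) ≃ₗ[K] (V × W),
      (∀ p, (g₁ p).2 = p.2) ∧ (∀ p, (g₂ p).1 = p.1) ∧ (∀ p, (g₃ p).2 = p.2) ∧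
      ∀ p, φ p = g₁ (g₂ (g₃ p))) ∧
    (∃ h₁ h₂ h₃ : (V × W) ≃ₗ[K] (V × W),
      (∀ p, (h₁ p).1 = p.1) ∧ (∀ p, (h₂ p).2 = p.2) ∧ (∀ p, (h₃ p).1 = p.1) ∧
      ∀ p, φ p = h₁ (h₂ (h₃ p))) :=
  ⟨exists_fixSnd_fixFst_fixSnd φ, exists_fixFst_fixSnd_fixFst φ⟩
end

section
/- Let G = Homeo(ℝ × ℝ) be the group of self-homeomorphisms of the plane ℝ × ℝ (with the product topology), let G_L ≤ G be the subgroup of homeomorphisms h satisfying h(x,y) = (x', y) for some x' (for all (x,y)), and let G_R ≤ G be the subgroup of homeomorphisms h satisfying h(x,y) = (x, y') for some y'. Then there exists a self-homeomorphism of ℝ × ℝ that does not belong to the subgroup of G generated by G_L ∪ G_R; in particular, for every finite word w over {L, R} it is not in the set product G_{w_1}·G_{w_2}⋯G_{w_{|w|}}. -/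
/-!
Identify the plane with `ℂ`. A homeomorphism preserving the second coordinate is strictly monotone
on every horizontal line, in a direction independent of the line. Hence (after composing with the
reflection `z ↦ -conj z` if the direction is decreasing) it never maps a displacement `p - c` to a
nonpositive multiple of itself, so a continuous argument of a curve seen from a point moves by at
most `π` at each time, and its oscillation grows by at most `2π`. Swapping the coordinates gives
the same for the other factor. A product of `n` generators therefore maps the vertical segment
`t ↦ (0, t)`, `0 < t ≤ 1`, seen from the origin (constant argument `π / 2`), to a curve whose
argument oscillates by at most `2πn`, whereas the twist `z ↦ exp (i / |z|) z` turns it into a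
spiral with unbounded argument `1 / t + π / 2`.
-/

open Complex Set Function ComplexConjugate
open scoped Real

noncomputable section

namespace PlaneHomeo

def HasBoundedArgLift {α : Type*} [TopologicalSpace α] (f : α → ℂ) (S : Set α) (B : ℝ) :
    Prop :=
  ∃ L : α → ℂ, ContinuousOn L S ∧ (∀ t ∈ S, f t = exp (L t)) ∧
    ∀ s ∈ S, ∀ t ∈ S, |(L t).im - (L s).im| ≤ B

namespace HasBoundedArgLift

variable {α : Type*} [TopologicalSpace α] {f g : α → ℂ} {S : Set α} {B : ℝ}

lemma ne_zero (h : HasBoundedArgLift f S B) {t : α} (ht : t ∈ S) : f t ≠ 0 := by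
  obtain ⟨L, -, hL, -⟩ := h
  exact hL t ht ▸ exp_ne_zero _

lemma continuousOn (h : HasBoundedArgLift f S B) : ContinuousOn f S := by
  obtain ⟨L, hLc, hL, -⟩ := h
  exact (continuous_exp.comp_continuousOn hLc).congr hL

lemma mono (h : HasBoundedArgLift f S B) {B' : ℝ} (hB : B ≤ B') : HasBoundedArgLift f S B' := by
  obtain ⟨L, hLc, hL, hLB⟩ := h
  exact ⟨L, hLc, hL, fun s hs t ht => (hLB s hs t ht).trans hB⟩

lemma mul_conj (h : HasBoundedArgLift f S B) {a : ℂ} (ha : a ≠ 0) :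
    HasBoundedArgLift (fun t => a * conj (f t)) S B := by
  obtain ⟨L, hLc, hL, hLB⟩ := h
  refine ⟨fun t => log a + conj (L t),
    continuousOn_const.add (continuous_conj.comp_continuousOn hLc), fun t ht => ?_,
    fun s hs t ht => ?_⟩
  · dsimp only
    rw [Complex.exp_add, exp_log ha, exp_conj, hL t ht]
  · calc |(log a + conj (L t)).im - (log a + conj (L s)).im| = |(L t).im - (L s).im| := by
          rw [← abs_neg]; simp only [add_im, conj_im]; ring_nf
      _ ≤ B := hLB s hs t ht

lemma of_div_mem_slitPlane (hg : HasBoundedArgLift g S B) (hf : ContinuousOn f S)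
    (hfg : ∀ t ∈ S, f t / g t ∈ slitPlane) : HasBoundedArgLift f S (B + 2 * π) := by
  obtain ⟨L, hLc, hL, hLB⟩ := id hg
  refine ⟨fun t => L t + log (f t / g t),
    hLc.add ((hf.div hg.continuousOn fun t => hg.ne_zero).clog hfg), fun t ht => ?_,
    fun s hs t ht => ?_⟩
  · rw [Complex.exp_add, exp_log (slitPlane_ne_zero (hfg t ht)), ← hL t ht,
      mul_div_cancel₀ _ (hg.ne_zero ht)]
  · have hst := abs_le.1 (hLB s hs t ht)
    have := neg_pi_lt_arg (f s / g s)
    have := neg_pi_lt_arg (f t / g t)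
    have := arg_le_pi (f s / g s)
    have := arg_le_pi (f t / g t)
    simp only [add_im, log_im]
    rw [abs_le]
    constructor <;> linarith

/-- On a preconnected set, two continuous logarithms of `f` differ by a constant of `2πiℤ`. -/
lemma abs_im_sub_le (h : HasBoundedArgLift f S B) (hS : IsPreconnected S) {L : α → ℂ}
    (hLc : ContinuousOn L S) (hL : ∀ t ∈ S, f t = exp (L t)) {s t : α} (hs : s ∈ S)
    (ht : t ∈ S) : |(L t).im - (L s).im| ≤ B := by
  obtain ⟨M, hMc, hM, hMB⟩ := h
  have hmaps : MapsTo (fun u => (M u).im - (L u).im) S (AddSubgroup.zmultiples (2 * π)) := by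
    intro u hu
    obtain ⟨n, hn⟩ := exp_eq_exp_iff_exists_int.1 ((hM u hu).symm.trans (hL u hu))
    exact ⟨n, by simp [hn]⟩
  have hdiscrete : IsDiscrete (AddSubgroup.zmultiples (2 * π) : Set ℝ) :=
    isDiscrete_iff_discreteTopology.2
      (inferInstanceAs (DiscreteTopology (AddSubgroup.zmultiples (2 * π))))
  have hconst := hS.constant_of_mapsTo (f := fun u => (M u).im - (L u).im) hdiscrete
    ((continuous_im.comp_continuousOn hMc).sub (continuous_im.comp_continuousOn hLc)) hmaps hs ht
  have := hMB s hs t ht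
  rwa [show (L t).im - (L s).im = (M t).im - (M s).im by linarith]

end HasBoundedArgLift

def displacement (Γ : ℝ → ℝ × ℝ) (c : ℝ × ℝ) (t : ℝ) : ℂ :=
  equivRealProdCLM.symm (Γ t) - equivRealProdCLM.symm c

lemma div_mem_slitPlane_of_strictMono {f : ℝ × ℝ → ℝ × ℝ} (hf : ∀ p, (f p).2 = p.2)
    (hmono : ∀ y, StrictMono fun x => (f (x, y)).1) {p c : ℝ × ℝ} (hpc : p ≠ c) :
    (equivRealProdCLM.symm (f p) - equivRealProdCLM.symm (f c)) /
      (equivRealProdCLM.symm p - equivRealProdCLM.symm c) ∈ slitPlane := by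
  set v := equivRealProdCLM.symm (f p) - equivRealProdCLM.symm (f c)
  set w := equivRealProdCLM.symm p - equivRealProdCLM.symm c
  have hw : w ≠ 0 := sub_ne_zero.2 (equivRealProdCLM.symm.injective.ne hpc)
  rw [mem_slitPlane_iff]
  by_contra! hvw
  obtain ⟨r, hr, hv⟩ : ∃ r : ℝ, r ≤ 0 ∧ v = r * w :=
    ⟨(v / w).re, hvw.1, (div_eq_iff hw).1 (Complex.ext (by simp) (by simp [hvw.2]))⟩
  have him : p.2 - c.2 = r * (p.2 - c.2) := by simpa [v, w, hf] using congrArg im hv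
  have hre : (f p).1 - (f c).1 = r * (p.1 - c.1) := by simpa [v, w] using congrArg re hv
  have hy : p.2 = c.2 := by nlinarith
  have hx : p.1 ≠ c.1 := fun hx => hpc (Prod.ext hx hy)
  obtain ⟨a, y⟩ := p
  obtain ⟨b, _⟩ := c
  dsimp only at hx hy hre
  subst hy
  have hpos : 0 < ((f (a, y)).1 - (f (b, y)).1) * (a - b) := by
    rcases hx.lt_or_gt with hab | hab
    · have := hmono y hab; nlinarith
    · have := hmono y hab; nlinarith
  rw [hre] at hpos
  nlinarith [sq_nonneg (a - b)]

namespace HasBoundedArgLift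

variable {S : Set ℝ} {B : ℝ} {Γ : ℝ → ℝ × ℝ} {c : ℝ × ℝ}

lemma map_of_strictMono {f : ℝ × ℝ → ℝ × ℝ} (hfc : Continuous f) (hf : ∀ p, (f p).2 = p.2)
    (hmono : ∀ y, StrictMono fun x => (f (x, y)).1) (hΓ : ContinuousOn Γ S)
    (h : HasBoundedArgLift (displacement Γ c) S B) :
    HasBoundedArgLift (displacement (f ∘ Γ) (f c)) S (B + 2 * π) :=
  h.of_div_mem_slitPlane
    (((equivRealProdCLM.symm.continuous.comp hfc).comp_continuousOn hΓ).sub continuousOn_const)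
    fun t ht => div_mem_slitPlane_of_strictMono hf hmono fun hΓc =>
      h.ne_zero ht (by simp [displacement, hΓc])

lemma map_of_eq_mul_conj {σ : ℝ × ℝ → ℝ × ℝ} {a : ℂ} (ha : a ≠ 0)
    (hσ : ∀ p, equivRealProdCLM.symm (σ p) = a * conj (equivRealProdCLM.symm p))
    (h : HasBoundedArgLift (displacement Γ c) S B) :
    HasBoundedArgLift (displacement (σ ∘ Γ) (σ c)) S B := by
  have hmul := h.mul_conj ha
  unfold displacement at hmul ⊢
  simpa only [comp_apply, hσ, map_sub, mul_sub] using hmul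

end HasBoundedArgLift

lemma strictMono_or_strictAnti_of_preserves_snd {e : ℝ × ℝ → ℝ × ℝ} (hc : Continuous e)
    (hi : Injective e) (he : ∀ p, (e p).2 = p.2) :
    (∀ y, StrictMono fun x => (e (x, y)).1) ∨ ∀ y, StrictAnti fun x => (e (x, y)).1 := by
  have hline (y : ℝ) : StrictMono (fun x => (e (x, y)).1) ∨ StrictAnti fun x => (e (x, y)).1 :=
    (by fun_prop : Continuous fun x => (e (x, y)).1).strictMono_of_inj fun a b hab => by
      simpa using hi (Prod.ext hab (by rw [he, he]))
  set D : ℝ → ℝ := fun y => (e (1, y)).1 - (e (0, y)).1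
  have hD (y : ℝ) : D y ≠ 0 := fun hy => by
    simpa using hi (Prod.ext (sub_eq_zero.1 hy) (by rw [he, he]))
  have hsign : (∀ y, 0 < D y) ∨ ∀ y, D y < 0 := by
    by_contra! h
    obtain ⟨⟨y₁, h₁⟩, y₂, h₂⟩ := h
    obtain ⟨y, hy⟩ := intermediate_value_univ y₁ y₂ (by fun_prop : Continuous D) ⟨h₁, h₂⟩
    exact hD y hy
  refine hsign.imp (fun hpos y => (hline y).resolve_right fun ha => ?_)
    (fun hneg y => (hline y).resolve_left fun hm => ?_)
  · exact (hpos y).not_gt (sub_neg.2 (ha one_pos))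
  · exact (hneg y).not_gt (sub_pos.2 (hm one_pos))

def DistortsWindingBy (g : ℝ × ℝ → ℝ × ℝ) (D : ℝ) : Prop :=
  Continuous g ∧ ∀ (S : Set ℝ) (Γ : ℝ → ℝ × ℝ) (c : ℝ × ℝ) (B : ℝ), ContinuousOn Γ S →
    HasBoundedArgLift (displacement Γ c) S B →
      HasBoundedArgLift (displacement (g ∘ Γ) (g c)) S (B + D)

lemma distortsWindingBy_id : DistortsWindingBy id 0 :=
  ⟨continuous_id, fun _ _ _ _ _ h => by simpa using h⟩

lemma DistortsWindingBy.comp {g h : ℝ × ℝ → ℝ × ℝ} {D E : ℝ} (hg : DistortsWindingBy g D)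
    (hh : DistortsWindingBy h E) : DistortsWindingBy (g ∘ h) (D + E) :=
  ⟨hg.1.comp hh.1, fun S Γ c B hΓ hB =>
    (hg.2 S (h ∘ Γ) (h c) (B + E) (hh.1.comp_continuousOn hΓ) (hh.2 S Γ c B hΓ hB)).mono
      (by linarith)⟩

lemma distortsWindingBy_of_preserves_snd {e : ℝ × ℝ → ℝ × ℝ} (hc : Continuous e)
    (hi : Injective e) (he : ∀ p, (e p).2 = p.2) : DistortsWindingBy e (2 * π) := by
  refine ⟨hc, fun S Γ c B hΓ h => ?_⟩
  rcases strictMono_or_strictAnti_of_preserves_snd hc hi he with hmono | hanti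
  · exact h.map_of_strictMono hc he hmono hΓ
  · -- the reflection `ρ` makes `e ∘ ρ` increasing on horizontal lines
    let ρ : ℝ × ℝ → ℝ × ℝ := fun p => (-p.1, p.2)
    have hρ (p : ℝ × ℝ) :
        equivRealProdCLM.symm (ρ p) = -1 * conj (equivRealProdCLM.symm p) := by
      apply Complex.ext <;> simp [ρ]
    simpa [ρ, comp_def] using (h.map_of_eq_mul_conj (by norm_num) hρ).map_of_strictMono
      (f := e ∘ ρ) (hc.comp (by fun_prop)) (fun p => he _)
      (fun y => (hanti y).comp fun _ _ => neg_lt_neg)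
      ((by fun_prop : Continuous ρ).comp_continuousOn hΓ)

lemma distortsWindingBy_of_preserves_fst {e : ℝ × ℝ → ℝ × ℝ} (hc : Continuous e)
    (hi : Injective e) (he : ∀ p, (e p).1 = p.1) : DistortsWindingBy e (2 * π) := by
  obtain ⟨-, hswap⟩ := distortsWindingBy_of_preserves_snd (e := Prod.swap ∘ e ∘ Prod.swap)
    (by fun_prop) (Prod.swap_injective.comp (hi.comp Prod.swap_injective)) fun p => he p.swap
  have hσ (p : ℝ × ℝ) : equivRealProdCLM.symm p.swap = I * conj (equivRealProdCLM.symm p) := by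
    apply Complex.ext <;> simp
  refine ⟨hc, fun S Γ c B hΓ h => ?_⟩
  simpa [comp_def] using (hswap S (Prod.swap ∘ Γ) c.swap B
    (continuous_swap.comp_continuousOn hΓ) (h.map_of_eq_mul_conj I_ne_zero hσ)).map_of_eq_mul_conj
      I_ne_zero hσ

lemma exists_distortsWindingBy_of_mem_closure {g : Equiv.Perm (ℝ × ℝ)}
    (hg : g ∈ Subgroup.closure
      ({g : Equiv.Perm (ℝ × ℝ) | Continuous g ∧ Continuous g.symm ∧ ∀ p, (g p).2 = p.2} ∪
       {g : Equiv.Perm (ℝ × ℝ) | Continuous g ∧ Continuous g.symm ∧ ∀ p, (g p).1 = p.1})) :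
    ∃ D, DistortsWindingBy g D := by
  induction hg using Subgroup.closure_induction'' with
  | mem g hg =>
    rcases hg with ⟨hc, -, he⟩ | ⟨hc, -, he⟩
    exacts [⟨_, distortsWindingBy_of_preserves_snd hc g.injective he⟩,
      ⟨_, distortsWindingBy_of_preserves_fst hc g.injective he⟩]
  | inv_mem g hg =>
    rcases hg with ⟨-, hc, he⟩ | ⟨-, hc, he⟩
    exacts [⟨_, distortsWindingBy_of_preserves_snd hc g⁻¹.injective
        fun p => by simpa using (he (g⁻¹ p)).symm⟩,
      ⟨_, distortsWindingBy_of_preserves_fst hc g⁻¹.injective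
        fun p => by simpa using (he (g⁻¹ p)).symm⟩]
  | one => exact ⟨0, distortsWindingBy_id⟩
  | mul g h _ _ hg hh =>
    obtain ⟨D, hD⟩ := hg
    obtain ⟨E, hE⟩ := hh
    exact ⟨D + E, hD.comp hE⟩

def twist (θ : ℝ → ℝ) (z : ℂ) : ℂ := exp (θ ‖z‖ * I) * z

lemma norm_twist (θ : ℝ → ℝ) (z : ℂ) : ‖twist θ z‖ = ‖z‖ := by
  simp [twist, norm_exp_ofReal_mul_I]

lemma twist_neg_twist (θ : ℝ → ℝ) (z : ℂ) : twist (-θ) (twist θ z) = z := by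
  rw [twist, norm_twist, twist, ← mul_assoc, ← Complex.exp_add]
  simp

lemma continuous_twist {θ : ℝ → ℝ} (hθ : ContinuousOn θ {0}ᶜ) : Continuous (twist θ) := by
  refine continuous_iff_continuousAt.2 fun z => ?_
  rcases eq_or_ne z 0 with rfl | hz
  · rw [ContinuousAt, show twist θ 0 = 0 by simp [twist], tendsto_zero_iff_norm_tendsto_zero]
    simpa [norm_twist] using continuous_norm.tendsto (0 : ℂ)
  · have hθz : ContinuousAt θ ‖z‖ :=
      hθ.continuousAt (isOpen_compl_singleton.mem_nhds (norm_ne_zero_iff.2 hz))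
    unfold twist
    fun_prop

def twistHomeomorph (θ : ℝ → ℝ) (hθ : ContinuousOn θ {0}ᶜ) : ℂ ≃ₜ ℂ where
  toFun := twist θ
  invFun := twist (-θ)
  left_inv := twist_neg_twist θ
  right_inv z := by simpa using twist_neg_twist (-θ) z
  continuous_toFun := continuous_twist hθ
  continuous_invFun := continuous_twist hθ.neg

def planeTwist : ℝ × ℝ ≃ₜ ℝ × ℝ :=
  equivRealProdCLM.toHomeomorph.symm.trans
    ((twistHomeomorph (·⁻¹) continuousOn_inv₀).trans equivRealProdCLM.toHomeomorph)

lemma equivRealProdCLM_symm_planeTwist (p : ℝ × ℝ) :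
    equivRealProdCLM.symm (planeTwist p) = twist (·⁻¹) (equivRealProdCLM.symm p) :=
  equivRealProdCLM.symm_apply_apply _

lemma exp_log_add_mul_I {t : ℝ} (ht : 0 < t) (θ : ℝ) :
    exp (Real.log t + θ * I) = t * exp (θ * I) := by
  rw [Complex.exp_add, ← ofReal_exp, Real.exp_log ht]

lemma hasBoundedArgLift_vertical :
    HasBoundedArgLift (displacement (fun t => (0, t)) 0) (Ioc 0 1) 0 := by
  refine ⟨fun t => Real.log t + (π / 2 : ℝ) * I, ?_, fun t ht => ?_, fun s _ t _ => by simp⟩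
  · exact (continuous_ofReal.comp_continuousOn
      (Real.continuousOn_log.mono fun t ht => ht.1.ne')).add continuousOn_const
  · rw [exp_log_add_mul_I ht.1]
    simp [displacement, equivRealProdCLM_symm_apply, exp_pi_div_two_mul_I]

lemma displacement_planeTwist_vertical {t : ℝ} (ht : 0 < t) :
    displacement (planeTwist ∘ fun t => (0, t)) (planeTwist 0) t =
      exp (Real.log t + (t⁻¹ + π / 2 : ℝ) * I) := by
  rw [displacement, comp_apply, equivRealProdCLM_symm_planeTwist,
    equivRealProdCLM_symm_planeTwist, exp_log_add_mul_I ht]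
  simp [twist, equivRealProdCLM_symm_apply, add_mul, Complex.exp_add, exp_pi_div_two_mul_I,
    abs_of_pos ht]
  ring

lemma not_distortsWindingBy_planeTwist (D : ℝ) : ¬ DistortsWindingBy planeTwist D := by
  intro h
  have hlift := h.2 (Ioc 0 1) (fun t => (0, t)) 0 0 (by fun_prop) hasBoundedArgLift_vertical
  have hbound (t : ℝ) (ht : t ∈ Ioc 0 1) : |t⁻¹ - 1| ≤ D := by
    have hlog : ContinuousOn (fun t : ℝ => (Real.log t : ℂ)) (Ioc 0 1) :=
      continuous_ofReal.comp_continuousOn (Real.continuousOn_log.mono fun t ht => ht.1.ne')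
    have hinv : ContinuousOn (fun t : ℝ => ((t⁻¹ + π / 2 : ℝ) : ℂ)) (Ioc 0 1) :=
      continuous_ofReal.comp_continuousOn
        ((continuousOn_inv₀.mono fun t ht => ht.1.ne').add continuousOn_const)
    simpa using hlift.abs_im_sub_le isPreconnected_Ioc (hlog.add (hinv.mul continuousOn_const))
      (fun t ht => displacement_planeTwist_vertical ht.1) (right_mem_Ioc.2 one_pos) ht
  have hD := hbound (|D| + 2)⁻¹
    ⟨by positivity, inv_le_one_of_one_le₀ (by linarith [abs_nonneg D])⟩
  rw [inv_inv, abs_of_pos (by linarith [abs_nonneg D])] at hD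
  linarith [le_abs_self D]

end PlaneHomeo

end

/-- There is a self-homeomorphism of the plane `ℝ × ℝ` (here: a permutation that is
continuous with continuous inverse) which does not lie in the subgroup generated by
the homeomorphisms preserving the second coordinate (`G_L`) together with those
preserving the first coordinate (`G_R`); in particular it is not equal to any finite
product of elements of `G_L ∪ G_R`. -/
theorem homeo_plane_not_generated_by_alternations :
    ∃ φ : Equiv.Perm (ℝ × ℝ), Continuous φ ∧ Continuous φ.symm ∧
      φ ∉ Subgroup.closure
        ({g : Equiv.Perm (ℝ × ℝ) |
            Continuous g ∧ Continuous g.symm ∧ ∀ p, (g p).2 = p.2} ∪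
         {g : Equiv.Perm (ℝ × ℝ) |
            Continuous g ∧ Continuous g.symm ∧ ∀ p, (g p).1 = p.1}) ∧
      ∀ l : List (Equiv.Perm (ℝ × ℝ)),
        (∀ g ∈ l,
          (Continuous g ∧ Continuous g.symm ∧ ∀ p, (g p).2 = p.2) ∨
          (Continuous g ∧ Continuous g.symm ∧ ∀ p, (g p).1 = p.1)) →
        φ ≠ l.prod := by
  open PlaneHomeo in
  refine ⟨planeTwist.toEquiv, planeTwist.continuous, planeTwist.continuous_symm,
    fun hmem => ?_, fun l hl hφ => ?_⟩
  · obtain ⟨D, hD⟩ := exists_distortsWindingBy_of_mem_closure hmem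
    exact not_distortsWindingBy_planeTwist D hD
  · obtain ⟨D, hD⟩ := exists_distortsWindingBy_of_mem_closure
      (list_prod_mem fun g hg => Subgroup.subset_closure (hl g hg))
    rw [← hφ] at hD
    exact not_distortsWindingBy_planeTwist D hD
end
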